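/- arXiv:2401.01977 — 5 statements merged into one kernel-verified Lean document; each statement's English description precedes it below -/
import Mathlib

section
/- Let (V_1, …, V_N) be an exchangeable family of random variables on a probability space (Ω, ℱ, P) taking values in a measurable space E, and let T ⊆ E be a measurable set. Define M(ω) = #{j ∈ {1, …, N} : V_j(ω) ∈ T}, and on the event {M = m} (for 1 ≤ m ≤ N) let j_1 < j_2 < … < j_m be the ordered indices with V_{j_k} ∈ T and set Ṽ_k = V_{j_k} for k = 1, …, m. If P(M = m) > 0, then for every permutation σ of {1, …, m} and all measurable sets A_1, …, A_m ⊆ E, P(Ṽ_1 ∈ A_1, …, Ṽ_m ∈ A_m | M = m) = P(Ṽ_{σ(1)} ∈ A_1, …, Ṽ_{σ(m)} ∈ A_m | M = m). -/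
open MeasureTheory ProbabilityTheory

/-- Lemma B.1(b): filtering an exchangeable vector to the coordinates lying in a
measurable set `T` (keeping their original order) yields a subvector that is
exchangeable conditional on the number `M` of retained coordinates.  The event
`{Ṽ_1 ∈ A_1, …, Ṽ_m ∈ A_m}` is expressed via the (unique, on `{M = m}`) strictly
monotone enumeration `j` of the indices whose coordinate lies in `T`. -/
theorem filtered_exchangeable_given_count
    {Ω E : Type*} [MeasurableSpace Ω] [MeasurableSpace E]
    {P : Measure Ω} [IsProbabilityMeasure P] {N : ℕ}
    (V : Fin N → Ω → E) (hVmeas : ∀ i, Measurable (V i))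
    (hexch : ∀ σ : Equiv.Perm (Fin N),
      Measure.map (fun ω (i : Fin N) => V (σ i) ω) P = Measure.map (fun ω i => V i ω) P)
    (T : Set E) (hT : MeasurableSet T)
    (m : ℕ) (hm1 : 1 ≤ m) (hmN : m ≤ N)
    (hpos : 0 < P {ω | Set.ncard {j : Fin N | V j ω ∈ T} = m})
    (σ : Equiv.Perm (Fin m)) (A : Fin m → Set E) (hA : ∀ k, MeasurableSet (A k)) :
    P[|{ω | Set.ncard {j : Fin N | V j ω ∈ T} = m}]
        {ω | ∃ j : Fin m → Fin N, StrictMono j ∧ (∀ i : Fin N, V i ω ∈ T ↔ ∃ k, j k = i) ∧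
          ∀ k : Fin m, V (j k) ω ∈ A k}
      = P[|{ω | Set.ncard {j : Fin N | V j ω ∈ T} = m}]
        {ω | ∃ j : Fin m → Fin N, StrictMono j ∧ (∀ i : Fin N, V i ω ∈ T ↔ ∃ k, j k = i) ∧
          ∀ k : Fin m, V (j (σ k)) ω ∈ A k} := by
  classical
  set C : Set Ω := {ω | Set.ncard {j : Fin N | V j ω ∈ T} = m} with hC
  set Φ : Ω → (Fin N → E) := fun ω i => V i ω with hΦdef
  have hΦmeas : Measurable Φ := measurable_pi_lambda _ hVmeas
  set μ : Measure (Fin N → E) := Measure.map Φ P with hμdef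
  -- index type: subsets of size m
  set α := {S : Finset (Fin N) // S.card = m} with hα
  let emb : α → Fin m → Fin N := fun S k => S.1.orderEmbOfFin S.2 k
  let D : α → Equiv.Perm (Fin m) → Set (Fin N → E) :=
    fun S ρ => {v | (∀ i, v i ∈ T ↔ i ∈ S.1) ∧ ∀ k, v (emb S (ρ k)) ∈ A k}
  have hDmeas : ∀ S ρ, MeasurableSet (D S ρ) := by
    intro S ρ
    have hrw : D S ρ = (⋂ i, {v : Fin N → E | v i ∈ T ↔ i ∈ S.1}) ∩
        ⋂ k, {v : Fin N → E | v (emb S (ρ k)) ∈ A k} := by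
      ext v
      simp only [D, Set.mem_setOf_eq, Set.mem_inter_iff, Set.mem_iInter]
    rw [hrw]
    apply MeasurableSet.inter
    · refine MeasurableSet.iInter fun i => ?_
      by_cases hi : i ∈ S.1
      · have : {v : Fin N → E | v i ∈ T ↔ i ∈ S.1} = (fun v : Fin N → E => v i) ⁻¹' T := by
          ext v; simp [hi]
        rw [this]; exact (measurable_pi_apply i) hT
      · have : {v : Fin N → E | v i ∈ T ↔ i ∈ S.1} = ((fun v : Fin N → E => v i) ⁻¹' T)ᶜ := by
          ext v; simp [hi]
        rw [this]; exact ((measurable_pi_apply i) hT).compl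
    · exact MeasurableSet.iInter fun k => (measurable_pi_apply (emb S (ρ k))) (hA k)
  -- union description of the events
  have hUnion : ∀ ρ : Equiv.Perm (Fin m),
      {v : Fin N → E | ∃ j : Fin m → Fin N, StrictMono j ∧
        (∀ i : Fin N, v i ∈ T ↔ ∃ k, j k = i) ∧ ∀ k : Fin m, v (j (ρ k)) ∈ A k}
      = ⋃ S : α, D S ρ := by
    intro ρ
    ext v
    simp only [Set.mem_setOf_eq, Set.mem_iUnion]
    constructor
    · rintro ⟨j, hjmono, hjT, hjA⟩
      have hinj : Function.Injective j := hjmono.injective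
      refine ⟨⟨Finset.univ.image j, ?_⟩, ?_, ?_⟩
      · rw [Finset.card_image_of_injective _ hinj, Finset.card_univ, Fintype.card_fin]
      · intro i
        rw [hjT i]
        simp [eq_comm]
      · intro k
        have hje : j = (Finset.univ.image j).orderEmbOfFin
            (by rw [Finset.card_image_of_injective _ hinj, Finset.card_univ,
              Fintype.card_fin]) :=
          Finset.orderEmbOfFin_unique _ (fun x => Finset.mem_image_of_mem j (Finset.mem_univ x))
            hjmono
        have := hjA k
        rwa [hje] at this
    · rintro ⟨S, hS1, hS2⟩
      refine ⟨emb S, (S.1.orderEmbOfFin S.2).strictMono, fun i => ?_, hS2⟩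
      rw [hS1 i]
      constructor
      · intro hi
        have : i ∈ Set.range (S.1.orderEmbOfFin S.2) := by
          rw [Finset.range_orderEmbOfFin]; exact hi
        obtain ⟨k, hk⟩ := this
        exact ⟨k, hk⟩
      · rintro ⟨k, rfl⟩
        have : emb S k ∈ Set.range (S.1.orderEmbOfFin S.2) := ⟨k, rfl⟩
        rwa [Finset.range_orderEmbOfFin] at this
  -- the key permutation invariance: μ (D S σ) = μ (D S 1)
  have hperm : ∀ S : α, μ (D S σ) = μ (D S 1) := by
    intro S
    set f : Fin m ≃ {x : Fin N // x ∈ S.1} := (S.1.orderIsoOfFin S.2).toEquiv with hf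
    set τ : Equiv.Perm (Fin N) := σ.extendDomain f with hτ
    have hτemb : ∀ k : Fin m, τ (emb S k) = emb S (σ k) := by
      intro k
      have h1 : (f k : Fin N) = emb S k := Finset.coe_orderIsoOfFin_apply S.1 S.2 k
      have h2 : (f (σ k) : Fin N) = emb S (σ k) := Finset.coe_orderIsoOfFin_apply S.1 S.2 _
      have := Equiv.Perm.extendDomain_apply_image σ f k
      rw [← h1, ← h2]
      exact_mod_cast this
    have hτmem : ∀ i : Fin N, τ i ∈ S.1 ↔ i ∈ S.1 := by
      intro i
      by_cases hi : i ∈ S.1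
      · rw [Equiv.Perm.extendDomain_apply_subtype σ f hi]
        exact iff_of_true (f (σ (f.symm ⟨i, hi⟩))).2 hi
      · rw [Equiv.Perm.extendDomain_apply_not_subtype σ f hi]
    -- the composition map
    set g : (Fin N → E) → (Fin N → E) := fun v i => v (τ i) with hg
    have hgmeas : Measurable g := measurable_pi_lambda _ fun i => measurable_pi_apply (τ i)
    have hginv : μ.map g = μ := by
      rw [hμdef, Measure.map_map hgmeas hΦmeas]
      have : g ∘ Φ = fun ω (i : Fin N) => V (τ i) ω := rfl
      rw [this]
      exact hexch τ
    have hpre : g ⁻¹' (D S 1) = D S σ := by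
      ext v
      simp only [Set.mem_preimage, D, Set.mem_setOf_eq, hg, Equiv.Perm.one_apply]
      constructor
      · rintro ⟨h1, h2⟩
        refine ⟨fun i => ?_, fun k => ?_⟩
        · have := h1 (τ.symm i)
          rw [Equiv.apply_symm_apply] at this
          rw [this, ← hτmem (τ.symm i), Equiv.apply_symm_apply]
        · have := h2 k
          rwa [hτemb k] at this
      · rintro ⟨h1, h2⟩
        refine ⟨fun i => ?_, fun k => ?_⟩
        · rw [h1 (τ i), hτmem i]
        · rw [hτemb k]; exact h2 k
    calc μ (D S σ) = μ (g ⁻¹' (D S 1)) := by rw [hpre]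
      _ = (μ.map g) (D S 1) := (Measure.map_apply hgmeas (hDmeas S 1)).symm
      _ = μ (D S 1) := by rw [hginv]
  -- disjointness of the union
  have hdisj : ∀ ρ : Equiv.Perm (Fin m),
      Pairwise (Function.onFun Disjoint fun S : α => D S ρ) := by
    intro ρ S S' hSS'
    refine Set.disjoint_left.mpr fun v hv hv' => ?_
    apply hSS'
    have : S.1 = S'.1 := by
      ext i
      rw [← hv.1 i, ← hv'.1 i]
    exact Subtype.ext this
  have hμUnion : ∀ ρ : Equiv.Perm (Fin m), μ (⋃ S : α, D S ρ) = ∑' S : α, μ (D S ρ) := by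
    intro ρ
    exact measure_iUnion (hdisj ρ) (fun S => hDmeas S ρ)
  -- the two events as preimages
  have hB : ∀ ρ : Equiv.Perm (Fin m),
      {ω | ∃ j : Fin m → Fin N, StrictMono j ∧ (∀ i : Fin N, V i ω ∈ T ↔ ∃ k, j k = i) ∧
        ∀ k : Fin m, V (j (ρ k)) ω ∈ A k}
      = Φ ⁻¹' (⋃ S : α, D S ρ) := by
    intro ρ
    rw [← hUnion ρ]
    rfl
  -- each event is contained in C
  have hsub : ∀ ρ : Equiv.Perm (Fin m), Φ ⁻¹' (⋃ S : α, D S ρ) ⊆ C := by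
    intro ρ ω hω
    simp only [Set.mem_preimage, Set.mem_iUnion] at hω
    obtain ⟨S, hS1, _⟩ := hω
    have : {j : Fin N | V j ω ∈ T} = (S.1 : Set (Fin N)) := by
      ext i; exact (hS1 i)
    show Set.ncard {j : Fin N | V j ω ∈ T} = m
    rw [this, Set.ncard_coe_finset]
    exact S.2
  -- probabilities of the two events agree
  have hPeq : P (Φ ⁻¹' (⋃ S : α, D S 1)) = P (Φ ⁻¹' (⋃ S : α, D S σ)) := by
    have h1 : P (Φ ⁻¹' (⋃ S : α, D S 1)) = μ (⋃ S : α, D S 1) :=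
      (Measure.map_apply hΦmeas (MeasurableSet.iUnion fun S => hDmeas S 1)).symm
    have h2 : P (Φ ⁻¹' (⋃ S : α, D S σ)) = μ (⋃ S : α, D S σ) :=
      (Measure.map_apply hΦmeas (MeasurableSet.iUnion fun S => hDmeas S σ)).symm
    rw [h1, h2, hμUnion, hμUnion]
    exact tsum_congr fun S => (hperm S).symm
  -- conditional probabilities
  have hcond : ∀ ρ : Equiv.Perm (Fin m),
      P[|C] (Φ ⁻¹' (⋃ S : α, D S ρ)) = (P C)⁻¹ * P (Φ ⁻¹' (⋃ S : α, D S ρ)) := by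
    intro ρ
    rw [cond_apply' (hΦmeas (MeasurableSet.iUnion fun S => hDmeas S ρ))]
    congr 1
    rw [Set.inter_eq_right.mpr (hsub ρ)]
  calc P[|C] {ω | ∃ j : Fin m → Fin N, StrictMono j ∧
        (∀ i : Fin N, V i ω ∈ T ↔ ∃ k, j k = i) ∧ ∀ k : Fin m, V (j k) ω ∈ A k}
      = P[|C] (Φ ⁻¹' (⋃ S : α, D S 1)) := by
        congr 1
        have := hB 1
        simpa using this
    _ = (P C)⁻¹ * P (Φ ⁻¹' (⋃ S : α, D S 1)) := hcond 1
    _ = (P C)⁻¹ * P (Φ ⁻¹' (⋃ S : α, D S σ)) := by rw [hPeq]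
    _ = P[|C] (Φ ⁻¹' (⋃ S : α, D S σ)) := (hcond σ).symm
    _ = _ := by rw [← hB σ]
end

section
/- Let (S_1, …, S_{n+1}) be an exchangeable family of real-valued random variables on a probability space (Ω, ℱ, P), and let 1 ≤ k ≤ n + 1. Then P(#{j ∈ {1, …, n+1} : S_j < S_{n+1}} ≥ k) ≤ (n + 1 − k)/(n + 1). -/
open MeasureTheory ProbabilityTheory
open Finset

open scoped Classical in
/-- Combinatorial core: at most `n+1-k` indices can have rank `≥ k`. -/
lemma aux_count_rank_ge (n k : ℕ) (hkn : k ≤ n + 1) (f : Fin (n + 1) → ℝ) :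
    (univ.filter fun i : Fin (n + 1) =>
        k ≤ (univ.filter fun j => f j < f i).card).card ≤ n + 1 - k := by
  set σ := Tuple.sort f with hσ
  have hmono : Monotone (f ∘ σ) := Tuple.monotone_sort f
  -- each index σ p has rank ≤ p
  have hrank : ∀ p : Fin (n + 1), (univ.filter fun j => f j < f (σ p)).card ≤ p.val := by
    intro p
    have hsub : (univ.filter fun j => f j < f (σ p)) ⊆ (Finset.Iio p).image σ := by
      intro j hj
      simp only [mem_filter, mem_univ, true_and] at hj
      have hlt : σ.symm j < p := by
        by_contra h
        push_neg at h
        have := hmono h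
        simp only [Function.comp_apply, Equiv.apply_symm_apply] at this
        exact absurd hj (not_lt.2 this)
      exact Finset.mem_image.2 ⟨σ.symm j, Finset.mem_Iio.2 hlt, Equiv.apply_symm_apply σ j⟩
    calc (univ.filter fun j => f j < f (σ p)).card
        ≤ ((Finset.Iio p).image σ).card := Finset.card_le_card hsub
      _ ≤ (Finset.Iio p).card := Finset.card_image_le
      _ = p.val := Fin.card_Iio p
  -- the "low" set has at least k elements
  have hlow : k ≤ (univ.filter fun i : Fin (n + 1) =>
      ¬ k ≤ (univ.filter fun j => f j < f i).card).card := by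
    have himg : (univ.image fun q : Fin k => σ (Fin.castLE hkn q)) ⊆
        univ.filter fun i : Fin (n + 1) =>
          ¬ k ≤ (univ.filter fun j => f j < f i).card := by
      intro i hi
      simp only [Finset.mem_image, mem_univ, true_and] at hi
      obtain ⟨q, hq⟩ := hi
      subst hq
      simp only [mem_filter, mem_univ, true_and, not_le]
      exact lt_of_le_of_lt (hrank _) q.isLt
    have hinj : Function.Injective fun q : Fin k => σ (Fin.castLE hkn q) :=
      σ.injective.comp (Fin.castLE_injective hkn)
    calc k = (univ : Finset (Fin k)).card := by simp
      _ = (univ.image fun q : Fin k => σ (Fin.castLE hkn q)).card :=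
          (Finset.card_image_of_injective _ hinj).symm
      _ ≤ _ := Finset.card_le_card himg
  have hsplit := Finset.card_filter_add_card_filter_not
    (s := (univ : Finset (Fin (n + 1))))
    (p := fun i => k ≤ (univ.filter fun j => f j < f i).card)
  have hcard : (univ : Finset (Fin (n + 1))).card = n + 1 := by simp
  omega


set_option linter.unusedVariables false in
open scoped Classical in
/-- Exchangeability rank bound: for an exchangeable family `(S_1, …, S_{n+1})` of
real random variables, the probability that the last one strictly exceeds at least
`k` of all `n + 1` of them is at most `(n + 1 - k)/(n + 1)`. -/
theorem exchangeable_rank_bound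
    {Ω : Type*} [MeasurableSpace Ω] {P : Measure Ω} [IsProbabilityMeasure P]
    (n : ℕ) (S : Fin (n + 1) → Ω → ℝ) (hSmeas : ∀ i, Measurable (S i))
    (hexch : ∀ σ : Equiv.Perm (Fin (n + 1)),
      Measure.map (fun ω (i : Fin (n + 1)) => S (σ i) ω) P
        = Measure.map (fun ω i => S i ω) P)
    (k : ℕ) (hk1 : 1 ≤ k) (hkn : k ≤ n + 1) :
    P {ω | k ≤ Set.ncard {j : Fin (n + 1) | S j ω < S (Fin.last n) ω}}
      ≤ (n + 1 - k : ℕ) / (n + 1 : ℕ) := by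
  -- rank-counting function on ℝ-vectors
  set g : (Fin (n + 1) → ℝ) → ℕ :=
    fun f => (univ.filter fun j => f j < f (Fin.last n)).card with hg
  have hgmeas : Measurable g := by
    have : g = fun f => ∑ j, if f j < f (Fin.last n) then 1 else 0 := by
      funext f; simp [hg, Finset.sum_boole]
    rw [this]
    exact Finset.measurable_sum _ fun j _ =>
      Measurable.ite (measurableSet_lt (measurable_pi_apply j) (measurable_pi_apply _))
        measurable_const measurable_const
  set B : Set (Fin (n + 1) → ℝ) := {f | k ≤ g f} with hB
  have hBmeas : MeasurableSet B := hgmeas (MeasurableSet.of_discrete (s := Set.Ici k))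
  -- ncard equals the filter card
  have hncard : ∀ ω, Set.ncard {j : Fin (n + 1) | S j ω < S (Fin.last n) ω}
      = g (fun j => S j ω) := by
    intro ω
    rw [Set.ncard_eq_toFinset_card']
    simp [hg]
  -- the goal set as a preimage
  have hgoal : {ω | k ≤ Set.ncard {j : Fin (n + 1) | S j ω < S (Fin.last n) ω}}
      = (fun ω i => S i ω) ⁻¹' B := by
    ext ω; simp [hB, hncard ω]
  -- events A i : last replaced by i
  set A : Fin (n + 1) → Set Ω := fun i => {ω | k ≤ (univ.filter fun j => S j ω < S i ω).card}
    with hA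
  have hFmeas : ∀ σ : Equiv.Perm (Fin (n + 1)),
      Measurable (fun ω (i : Fin (n + 1)) => S (σ i) ω) :=
    fun σ => measurable_pi_lambda _ fun i => hSmeas (σ i)
  have hApre : ∀ i : Fin (n + 1),
      (fun ω j => S (Equiv.swap i (Fin.last n) j) ω) ⁻¹' B = A i := by
    intro i
    ext ω
    simp only [Set.mem_preimage, hB, Set.mem_setOf_eq, hA, hg]
    simp only [Equiv.swap_apply_right]
    have hcards : (univ.filter fun j => S (Equiv.swap i (Fin.last n) j) ω < S i ω).card
        = (univ.filter fun j => S j ω < S i ω).card := by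
      apply Finset.card_bij (fun a _ => Equiv.swap i (Fin.last n) a)
      · intro a ha; simp only [mem_filter, mem_univ, true_and] at *; exact ha
      · intro a _ b _ h; exact (Equiv.swap i (Fin.last n)).injective h
      · intro b hb
        refine ⟨Equiv.swap i (Fin.last n) b, ?_, ?_⟩
        · simp only [mem_filter, mem_univ, true_and, Equiv.swap_apply_self] at *; exact hb
        · simp [Equiv.swap_apply_self]
    rw [hcards]
  have hAmeas : ∀ i, MeasurableSet (A i) := by
    intro i
    rw [← hApre i]
    exact hFmeas _ hBmeas
  -- equal probabilities
  have hAeq : ∀ i, P (A i) = P ((fun ω j => S j ω) ⁻¹' B) := by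
    intro i
    have hSm : Measurable (fun ω (i : Fin (n + 1)) => S i ω) :=
      measurable_pi_lambda _ hSmeas
    rw [← hApre i, ← Measure.map_apply (hFmeas _) hBmeas, hexch _,
      Measure.map_apply hSm hBmeas]
  -- sum of probabilities bound
  have hsum : ∑ i : Fin (n + 1), P (A i) ≤ ((n + 1 - k : ℕ) : ENNReal) := by
    have h1 : ∑ i : Fin (n + 1), P (A i)
        = ∫⁻ ω, ∑ i : Fin (n + 1), (A i).indicator (fun _ => (1 : ENNReal)) ω ∂P := by
      rw [lintegral_finset_sum _ fun i _ =>
        (measurable_const.indicator (hAmeas i))]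
      exact Finset.sum_congr rfl fun i _ => (lintegral_indicator_one (hAmeas i)).symm
    rw [h1]
    calc ∫⁻ ω, ∑ i : Fin (n + 1), (A i).indicator (fun _ => (1 : ENNReal)) ω ∂P
        ≤ ∫⁻ _, ((n + 1 - k : ℕ) : ENNReal) ∂P := by
          apply lintegral_mono
          intro ω
          dsimp only
          have : ∑ i : Fin (n + 1), (A i).indicator (fun _ => (1 : ENNReal)) ω
              = ((univ.filter fun i : Fin (n + 1) =>
                  k ≤ (univ.filter fun j => S j ω < S i ω).card).card : ENNReal) := by
            rw [← Finset.sum_boole]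
            apply Finset.sum_congr rfl
            intro i _
            by_cases h : ω ∈ A i
            · simp only [Set.indicator_of_mem h]
              simp only [hA, Set.mem_setOf_eq] at h
              simp [h]
            · simp only [Set.indicator_of_notMem h]
              simp only [hA, Set.mem_setOf_eq] at h
              simp [h]
          rw [this]
          exact_mod_cast Nat.cast_le.2 (aux_count_rank_ge n k hkn (fun j => S j ω))
      _ = ((n + 1 - k : ℕ) : ENNReal) := by simp
  -- conclude
  have hconst : ∑ i : Fin (n + 1), P (A i)
      = (n + 1 : ℕ) * P ((fun ω j => S j ω) ⁻¹' B) := by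
    rw [Finset.sum_congr rfl fun i _ => hAeq i]
    simp [mul_comm]
  rw [hgoal]
  rw [ENNReal.le_div_iff_mul_le (by simp) (by simp)]
  calc P ((fun ω i => S i ω) ⁻¹' B) * ((n + 1 : ℕ) : ENNReal)
      = ∑ i : Fin (n + 1), P (A i) := by rw [hconst]; ring
    _ ≤ _ := hsum
end

section
/- Let (S_1, …, S_{n+1}) be an exchangeable family of real-valued random variables on a probability space (Ω, ℱ, P) (in particular, i.i.d. random variables are exchangeable). Let α ∈ (0, 1), let k = ⌈(1 − α)(n + 1)⌉, and assume k ≤ n. Let q̂ be the k-th order statistic of (S_1, …, S_n). Then P(S_{n+1} ≤ q̂) ≥ 1 − α. -/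
open MeasureTheory ProbabilityTheory
open scoped ENNReal

/-- The `k`-th order statistic (`k`-th smallest entry, 1-indexed) of a tuple of reals. -/
noncomputable def orderStat {n : ℕ} (s : Fin n → ℝ) (k : Fin n) : ℝ :=
  s (Tuple.sort s k)

open Finset in
private lemma card_filter_comp_perm {ι : Type*} [Fintype ι] (σ : Equiv.Perm ι)
    (p : ι → Prop) [DecidablePred p] :
    (univ.filter fun i => p (σ i)).card = (univ.filter p).card := by
  refine Finset.card_bij' (fun i _ => σ i) (fun j _ => σ.symm j) ?_ ?_ ?_ ?_ <;>
    simp (config := { contextual := true })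

open Finset in
private lemma mono_count_lt {m : ℕ} {g : Fin m → ℝ} (hg : Monotone g) (j : Fin m) :
    (univ.filter fun i => g i < g j).card ≤ (j : ℕ) := by
  rw [← Fin.card_Iio j]
  apply Finset.card_le_card
  intro i hi
  simp only [mem_filter, mem_univ, true_and, mem_Iio] at *
  by_contra h
  exact absurd (hg (le_of_not_gt h)) (not_le.2 hi)

open Finset in
private lemma le_orderStat_iff {m : ℕ} (s : Fin m → ℝ) (x : ℝ) (k : ℕ)
    (hk1 : 1 ≤ k) (hkm : k ≤ m) :
    x ≤ orderStat s ⟨k - 1, by omega⟩ ↔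
      (univ.filter fun i => s i < x).card < k := by
  classical
  set σ := Tuple.sort s with hσ
  have hmono : Monotone fun i => s (σ i) := Tuple.monotone_sort s
  have hcard : (univ.filter fun i => s i < x).card
      = (univ.filter fun i => s (σ i) < x).card :=
    (card_filter_comp_perm σ (fun i => s i < x)).symm
  rw [hcard]
  show x ≤ s (σ ⟨k - 1, by omega⟩) ↔ _
  constructor
  · intro hx
    have h1 : (univ.filter fun i => s (σ i) < x).card
        ≤ (univ.filter fun i => s (σ i) < s (σ ⟨k - 1, by omega⟩)).card := by
      apply Finset.card_le_card
      intro i hi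
      simp only [mem_filter, mem_univ, true_and] at *
      exact lt_of_lt_of_le hi hx
    have h2 := mono_count_lt hmono ⟨k - 1, by omega⟩
    simp only at h2
    omega
  · intro hcard
    by_contra hx
    push_neg at hx
    have hsub : Finset.Iic (⟨k - 1, by omega⟩ : Fin m)
        ⊆ univ.filter fun i => s (σ i) < x := by
      intro i hi
      simp only [mem_Iic] at hi
      simp only [mem_filter, mem_univ, true_and]
      exact lt_of_le_of_lt (hmono hi) hx
    have h3 := Finset.card_le_card hsub
    rw [Fin.card_Iic] at h3
    simp only at h3
    omega

open Finset in
private lemma rank_count_ge {m : ℕ} (v : Fin m → ℝ) (k : ℕ) (hkm : k ≤ m) :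
    k ≤ (univ.filter fun j => (univ.filter fun i => v i < v j).card < k).card := by
  classical
  rcases Nat.eq_zero_or_pos k with hk0 | hk1
  · simp [hk0]
  · set σ := Tuple.sort v with hσ
    have hmono : Monotone fun i => v (σ i) := Tuple.monotone_sort v
    have hsub : (Finset.Iic (⟨k - 1, by omega⟩ : Fin m)).image σ ⊆
        univ.filter fun j => (univ.filter fun i => v i < v j).card < k := by
      intro j hj
      simp only [mem_image, mem_Iic] at hj
      obtain ⟨i, hi, rfl⟩ := hj
      simp only [mem_filter, mem_univ, true_and]
      have h1 : (univ.filter fun i' => v i' < v (σ i)).card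
          = (univ.filter fun i' => v (σ i') < v (σ i)).card :=
        (card_filter_comp_perm σ (fun i' => v i' < v (σ i))).symm
      rw [h1]
      have h2 := mono_count_lt hmono i
      have hiv : (i : ℕ) ≤ k - 1 := hi
      omega
    have h3 := Finset.card_le_card hsub
    rw [Finset.card_image_of_injective _ σ.injective, Fin.card_Iic] at h3
    simp only at h3
    omega

open Finset in
private lemma card_filter_castSucc {n : ℕ} (p : Fin (n + 1) → Prop) [DecidablePred p]
    (hlast : ¬ p (Fin.last n)) :
    (univ.filter p).card = (univ.filter fun i : Fin n => p i.castSucc).card := by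
  rw [Fin.univ_castSuccEmb, Finset.filter_cons, if_neg hlast, Finset.filter_map,
    Finset.card_map]
  rfl

private lemma measurable_rankSet {m : ℕ} (j : Fin m) (k : ℕ) :
    MeasurableSet {v : Fin m → ℝ |
      (Finset.univ.filter fun i => v i < v j).card < k} := by
  have hf : Measurable fun v : Fin m → ℝ =>
      (Finset.univ.filter fun i => v i < v j).card := by
    simp only [Finset.card_filter]
    exact Finset.measurable_sum _ fun i _ =>
      Measurable.ite (measurableSet_lt (measurable_pi_apply i) (measurable_pi_apply j))
        measurable_const measurable_const
  exact hf measurableSet_Iio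

/-- Split conformal coverage: for an exchangeable family `(S_1, …, S_{n+1})` of real
random variables, `α ∈ (0,1)` and `k = ⌈(1 − α)(n + 1)⌉ ≤ n`, the last variable is at
most the `k`-th order statistic of the first `n` variables with probability `≥ 1 − α`.
(The hypothesis `hk1 : 1 ≤ k` is automatic since `(1 − α)(n + 1) > 0`.) -/
theorem split_conformal_coverage
    {Ω : Type*} [MeasurableSpace Ω] {P : Measure Ω} [IsProbabilityMeasure P]
    (n : ℕ) (S : Fin (n + 1) → Ω → ℝ) (hSmeas : ∀ i, Measurable (S i))
    (hexch : ∀ σ : Equiv.Perm (Fin (n + 1)),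
      Measure.map (fun ω (i : Fin (n + 1)) => S (σ i) ω) P
        = Measure.map (fun ω i => S i ω) P)
    (α : ℝ) (hα : α ∈ Set.Ioo (0 : ℝ) 1)
    (k : ℕ) (hk : k = ⌈(1 - α) * (n + 1 : ℝ)⌉₊) (hk1 : 1 ≤ k) (hkn : k ≤ n) :
    ENNReal.ofReal (1 - α) ≤
      P {ω | S (Fin.last n) ω
          ≤ orderStat (fun i : Fin n => S i.castSucc ω) ⟨k - 1, by omega⟩} := by
  obtain ⟨hα0, hα1⟩ := hα
  classical
  set vec : Ω → (Fin (n + 1) → ℝ) := fun ω i => S i ω with hvec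
  have hvecm : Measurable vec := measurable_pi_lambda _ hSmeas
  set B : Fin (n + 1) → Set (Fin (n + 1) → ℝ) := fun j =>
    {v | (Finset.univ.filter fun i => v i < v j).card < k} with hB
  have hBm : ∀ j, MeasurableSet (B j) := fun j => measurable_rankSet j k
  -- exchangeability: all marginal "rank" events have the same probability
  have hA : ∀ j, P (vec ⁻¹' B j) = P (vec ⁻¹' B (Fin.last n)) := by
    intro j
    set σ := Equiv.swap j (Fin.last n) with hσ
    have h := hexch σ
    have hre : (fun ω (i : Fin (n + 1)) => S (σ i) ω)
        = (fun v : Fin (n + 1) → ℝ => fun i => v (σ i)) ∘ vec := rfl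
    have hrm : Measurable fun v : Fin (n + 1) → ℝ => fun i => v (σ i) :=
      measurable_pi_lambda _ fun i => measurable_pi_apply _
    have h1 : P (vec ⁻¹' ((fun v : Fin (n + 1) → ℝ => fun i => v (σ i)) ⁻¹'
          B (Fin.last n))) = P (vec ⁻¹' B (Fin.last n)) := by
      have hc := congrArg (fun μ : Measure (Fin (n + 1) → ℝ) => μ (B (Fin.last n))) h
      rwa [hre, Measure.map_apply (hrm.comp hvecm) (hBm _),
        Measure.map_apply hvecm (hBm _), Set.preimage_comp] at hc
    have h2 : (fun v : Fin (n + 1) → ℝ => fun i => v (σ i)) ⁻¹' B (Fin.last n) = B j := by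
      ext v
      simp only [hB, Set.mem_preimage, Set.mem_setOf_eq]
      have hcc : (Finset.univ.filter fun i => v (σ i) < v (σ (Fin.last n))).card
          = (Finset.univ.filter fun i => v i < v (σ (Fin.last n))).card :=
        card_filter_comp_perm σ (fun i => v i < v (σ (Fin.last n)))
      rw [hcc, hσ, Equiv.swap_apply_right]
    rw [← h2, ← h1]
  -- counting bound: k ≤ (n+1) · P(E)
  have key : (k : ℝ≥0∞) ≤ ((n : ℝ≥0∞) + 1) * P (vec ⁻¹' B (Fin.last n)) := by
    have hsum : ∑ j : Fin (n + 1), P (vec ⁻¹' B j)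
        = ((n : ℝ≥0∞) + 1) * P (vec ⁻¹' B (Fin.last n)) := by
      rw [Finset.sum_congr rfl fun j _ => hA j, Finset.sum_const, Finset.card_univ,
        Fintype.card_fin, nsmul_eq_mul]
      push_cast
      ring
    rw [← hsum]
    have hpoint : ∀ ω, (k : ℝ≥0∞)
        ≤ ∑ j : Fin (n + 1), (vec ⁻¹' B j).indicator (1 : Ω → ℝ≥0∞) ω := by
      intro ω
      have hcnt := rank_count_ge (vec ω) k (by omega)
      calc (k : ℝ≥0∞)
          ≤ ((Finset.univ.filter fun j : Fin (n + 1) =>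
              (Finset.univ.filter fun i => vec ω i < vec ω j).card < k).card : ℝ≥0∞) := by
            exact_mod_cast hcnt
        _ = ∑ j : Fin (n + 1), (vec ⁻¹' B j).indicator (1 : Ω → ℝ≥0∞) ω := by
            rw [Finset.card_filter, Nat.cast_sum]
            refine Finset.sum_congr rfl fun j _ => ?_
            simp only [Set.indicator_apply, Set.mem_preimage, hB, Set.mem_setOf_eq,
              Pi.one_apply]
            split_ifs <;> simp
    calc (k : ℝ≥0∞) = ∫⁻ _, (k : ℝ≥0∞) ∂P := by simp
      _ ≤ ∫⁻ ω, ∑ j : Fin (n + 1), (vec ⁻¹' B j).indicator (1 : Ω → ℝ≥0∞) ω ∂P :=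
          lintegral_mono hpoint
      _ = ∑ j : Fin (n + 1), ∫⁻ ω, (vec ⁻¹' B j).indicator (1 : Ω → ℝ≥0∞) ω ∂P :=
          lintegral_finset_sum _ fun j _ => measurable_const.indicator (hvecm (hBm j))
      _ = ∑ j : Fin (n + 1), P (vec ⁻¹' B j) :=
          Finset.sum_congr rfl fun j _ => lintegral_indicator_one (hvecm (hBm j))
  -- the target event equals the last rank event
  have hev : {ω | S (Fin.last n) ω
      ≤ orderStat (fun i : Fin n => S i.castSucc ω) ⟨k - 1, by omega⟩}
      = vec ⁻¹' B (Fin.last n) := by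
    ext ω
    simp only [Set.mem_setOf_eq, Set.mem_preimage, hB]
    rw [le_orderStat_iff _ _ k hk1 hkn]
    have hcc := card_filter_castSucc
      (fun i : Fin (n + 1) => vec ω i < vec ω (Fin.last n)) (lt_irrefl _)
    rw [hcc]
  rw [hev]
  -- arithmetic conclusion
  have hkreal : (1 - α) * (n + 1 : ℝ) ≤ (k : ℝ) := by
    rw [hk]; exact Nat.le_ceil _
  have h2 : ENNReal.ofReal (1 - α) * ((n : ℝ≥0∞) + 1) ≤ (k : ℝ≥0∞) := by
    have hc : ((n : ℝ≥0∞) + 1) = ENNReal.ofReal ((n : ℝ) + 1) := by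
      rw [ENNReal.ofReal_add (by positivity) zero_le_one]
      simp
    rw [hc, ← ENNReal.ofReal_mul (by linarith)]
    calc ENNReal.ofReal ((1 - α) * ((n : ℝ) + 1))
        ≤ ENNReal.ofReal (k : ℝ) := ENNReal.ofReal_le_ofReal (by linarith)
      _ = (k : ℝ≥0∞) := ENNReal.ofReal_natCast k
  have hdiv : (k : ℝ≥0∞) / ((n : ℝ≥0∞) + 1) ≤ P (vec ⁻¹' B (Fin.last n)) :=
    ENNReal.div_le_of_le_mul (by rwa [mul_comm] at key)
  refine le_trans ?_ hdiv
  rw [ENNReal.le_div_iff_mul_le (Or.inl (by simp)) (Or.inl (by simp))]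
  exact h2
end

section
/- Let M_max ≥ 1 and m ≥ 1. On a probability space (Ω, ℱ, P), let (M_1, S_1), …, (M_{m+1}, S_{m+1}) be i.i.d. random elements, where M_i takes values in {1, …, M_max} and S_i = (S_{i,1}, …, S_{i,M_max}) takes values in ℝ^{M_max}, and suppose that for every i and every μ ∈ {1, …, M_max} with P(M_i = μ) > 0, conditional on {M_i = μ} the family (S_{i,1}, …, S_{i,μ}) is exchangeable (the conditional joint law of (S_{i,1}, …, S_{i,μ}, M_i) given {M_i = μ} is invariant under permutations of the first μ coordinates). Let α ∈ (0, 1), define the weighted empirical CDF F̂(t) = (1/(m+1))·Σ_{i=1}^{m+1} (1/M_i)·Σ_{j=1}^{M_i} 1{S_{i,j} ≤ t} for t ∈ ℝ, and set q̂(ω) = inf{t ∈ ℝ : F̂(t)(ω) ≥ 1 − α}. Then P(S_{m+1,1} ≤ q̂) ≥ 1 − α. -/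
open MeasureTheory ProbabilityTheory
open scoped ENNReal

namespace WCCaux

/-- weighted strict rank function -/
noncomputable def rkq (n N : ℕ) (Mv : Fin n → ℕ) (s : Fin n → Fin N → ℝ) (t : ℝ) : ℝ :=
  ∑ i, ∑ j : Fin N, if (j : ℕ) < Mv i ∧ s i j < t then (1 : ℝ) / (n * Mv i) else 0

noncomputable def rkx (n N : ℕ) (x : Fin n → ℕ × (Fin N → ℝ)) (t : ℝ) : ℝ :=
  rkq n N (fun i => (x i).1) (fun i j => (x i).2 j) t

def Bset (n N : ℕ) (β : ℝ) (i : Fin n) (j : Fin N) : Set (Fin n → ℕ × (Fin N → ℝ)) :=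
  {x | β ≤ rkx n N x ((x i).2 j)}

def Ai (n N : ℕ) (i : Fin n) (μ : ℕ) : Set (Fin n → ℕ × (Fin N → ℝ)) :=
  {x | (x i).1 = μ}

lemma measurable_rkx_eval (n N : ℕ) (i : Fin n) (j : Fin N) :
    Measurable fun x : Fin n → ℕ × (Fin N → ℝ) => rkx n N x ((x i).2 j) := by
  have hM : ∀ i' : Fin n, Measurable fun x : Fin n → ℕ × (Fin N → ℝ) => (x i').1 :=
    fun i' => measurable_fst.comp (measurable_pi_apply i')
  have hS : ∀ (i' : Fin n) (j' : Fin N),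
      Measurable fun x : Fin n → ℕ × (Fin N → ℝ) => (x i').2 j' :=
    fun i' j' => (measurable_pi_apply j').comp (measurable_snd.comp (measurable_pi_apply i'))
  unfold rkx rkq
  apply Finset.measurable_sum
  intro i' _
  apply Finset.measurable_sum
  intro j' _
  apply Measurable.ite
  · apply MeasurableSet.inter
    · exact (hM i') (measurableSet_lt measurable_const measurable_id)
    · exact measurableSet_lt (hS i' j') (hS i j)
  · exact measurable_const.div
      (measurable_const.mul ((measurable_of_countable _).comp (hM i')))
  · exact measurable_const

lemma measurableSet_Bset (n N : ℕ) (β : ℝ) (i : Fin n) (j : Fin N) :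
    MeasurableSet (Bset n N β i j) :=
  measurableSet_le measurable_const (measurable_rkx_eval n N i j)

lemma measurableSet_Ai (n N : ℕ) (i : Fin n) (μ : ℕ) :
    MeasurableSet (Ai n N i μ) :=
  (measurable_fst.comp (measurable_pi_apply i)) (measurableSet_singleton μ)

lemma rkx_comp_perm {n N : ℕ} (e : Equiv.Perm (Fin n)) (x : Fin n → ℕ × (Fin N → ℝ)) (t : ℝ) :
    rkx n N (fun k => x (e k)) t = rkx n N x t := by
  unfold rkx rkq
  exact Equiv.sum_comp e fun i' =>
    ∑ j : Fin N, if (j : ℕ) < (x i').1 ∧ (x i').2 j < t then (1 : ℝ) / (n * (x i').1) else 0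

lemma perm_lt_iff {N μ : ℕ} (σ : Equiv.Perm (Fin N)) (hfix : ∀ k : Fin N, μ ≤ (k : ℕ) → σ k = k)
    (j : Fin N) : (σ j : ℕ) < μ ↔ (j : ℕ) < μ := by
  constructor
  · intro h
    by_contra hj
    push_neg at hj
    rw [hfix j hj] at h
    omega
  · intro h
    by_contra hs
    push_neg at hs
    have := hfix (σ j) hs
    have hj := σ.injective this
    rw [← hj] at h
    omega

lemma rkx_update {n N : ℕ} (i0 : Fin n) (σ : Equiv.Perm (Fin N)) (μ : ℕ)
    (hfix : ∀ k : Fin N, μ ≤ (k : ℕ) → σ k = k) (x : Fin n → ℕ × (Fin N → ℝ))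
    (hx : (x i0).1 = μ) (t : ℝ) :
    rkx n N (Function.update x i0 ((x i0).1, fun j => (x i0).2 (σ j))) t = rkx n N x t := by
  unfold rkx rkq
  apply Finset.sum_congr rfl
  intro i' _
  by_cases hi : i' = i0
  · subst hi
    simp only [Function.update_self]
    have hterm : ∀ j : Fin N,
        (if (j : ℕ) < (x i').1 ∧ (x i').2 (σ j) < t then (1 : ℝ) / (n * (x i').1) else 0)
        = (if (σ j : ℕ) < (x i').1 ∧ (x i').2 (σ j) < t then (1 : ℝ) / (n * (x i').1) else 0) := by
      intro j
      have : ((j : ℕ) < (x i').1 ∧ (x i').2 (σ j) < t)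
          ↔ ((σ j : ℕ) < (x i').1 ∧ (x i').2 (σ j) < t) := by
        rw [hx, perm_lt_iff σ hfix j]
      rw [if_congr this rfl rfl]
    rw [Finset.sum_congr rfl fun j _ => hterm j]
    exact Equiv.sum_comp σ fun k =>
      if (k : ℕ) < (x i').1 ∧ (x i').2 k < t then (1 : ℝ) / (n * (x i').1) else 0
  · simp only [Function.update_of_ne hi]

/-- joint law of iid variables is the product of the common marginal -/
lemma map_joint_eq_pi {Ω : Type*} [MeasurableSpace Ω] (P : Measure Ω) [IsProbabilityMeasure P]
    {n : ℕ} {E : Type*} [MeasurableSpace E] (X : Fin n → Ω → E) (hX : ∀ i, Measurable (X i))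
    (hindep : iIndepFun X P) (i0 : Fin n)
    (hident : ∀ i, P.map (X i) = P.map (X i0)) :
    P.map (fun ω i => X i ω) = Measure.pi (fun _ => P.map (X i0)) := by
  haveI : IsProbabilityMeasure (P.map (X i0)) :=
    Measure.isProbabilityMeasure_map (hX i0).aemeasurable
  have hY : Measurable fun ω i => X i ω := measurable_pi_lambda _ hX
  refine (Measure.pi_eq fun s hs => ?_).symm
  rw [Measure.map_apply hY (MeasurableSet.univ_pi hs)]
  have hpre : (fun ω i => X i ω) ⁻¹' Set.univ.pi s = ⋂ i, X i ⁻¹' s i := by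
    ext ω; simp [Set.mem_pi]
  have h := hindep.measure_inter_preimage_eq_mul Finset.univ (fun i _ => hs i)
  have hbi : (⋂ i ∈ (Finset.univ : Finset (Fin n)), X i ⁻¹' s i) = ⋂ i, X i ⁻¹' s i := by
    simp
  rw [hpre, ← hbi, h]
  exact Finset.prod_congr rfl fun i _ => by
    rw [← Measure.map_apply (hX i) (hs i), hident i]

lemma card_filter_lt {N μ : ℕ} (hμN : μ ≤ N) :
    (Finset.univ.filter (fun j : Fin N => (j : ℕ) < μ)).card = μ := by
  have : (Finset.univ.filter (fun j : Fin N => (j : ℕ) < μ)) =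
      (Finset.range μ).attachFin (fun m hm => lt_of_lt_of_le (Finset.mem_range.mp hm) hμN) := by
    ext j
    simp [Finset.mem_attachFin]
  rw [this, Finset.card_attachFin, Finset.card_range]

lemma sum_weights {n N : ℕ} (hn : 0 < n) (Mv : Fin n → ℕ) (hM1 : ∀ i, 1 ≤ Mv i)
    (hM2 : ∀ i, Mv i ≤ N) :
    ∑ i : Fin n, ∑ j : Fin N, (if (j : ℕ) < Mv i then (1 : ℝ) / (n * Mv i) else 0) = 1 := by
  have h1 : ∀ i : Fin n,
      ∑ j : Fin N, (if (j : ℕ) < Mv i then (1 : ℝ) / (n * Mv i) else 0) = 1 / n := by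
    intro i
    rw [← Finset.sum_filter, Finset.sum_const, card_filter_lt (hM2 i)]
    have hMpos : (0:ℝ) < Mv i := by exact_mod_cast (hM1 i)
    have hnpos : (0:ℝ) < n := by exact_mod_cast hn
    rw [nsmul_eq_mul]
    field_simp
  rw [Finset.sum_congr rfl (fun i _ => h1 i), Finset.sum_const, Finset.card_univ,
    Fintype.card_fin, nsmul_eq_mul]
  have hnpos : (0:ℝ) < n := by exact_mod_cast hn
  field_simp

lemma det_bound {n N : ℕ} (hn : 0 < n) (Mv : Fin n → ℕ) (hM1 : ∀ i, 1 ≤ Mv i)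
    (hM2 : ∀ i, Mv i ≤ N) (s : Fin n → Fin N → ℝ) {β : ℝ} (hβ1 : β ≤ 1) :
    ∑ i : Fin n, ∑ j : Fin N,
      (if (j : ℕ) < Mv i ∧ β ≤ rkq n N Mv s (s i j) then (1 : ℝ) / (n * Mv i) else 0)
      ≤ 1 - β := by
  classical
  set A : Finset (Fin n × Fin N) :=
    Finset.univ.filter (fun p => (p.2 : ℕ) < Mv p.1 ∧ β ≤ rkq n N Mv s (s p.1 p.2)) with hA
  rcases A.eq_empty_or_nonempty with hAe | hAne
  · have hz : ∀ (i : Fin n) (j : Fin N), (if (j : ℕ) < Mv i ∧ β ≤ rkq n N Mv s (s i j)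
        then (1 : ℝ) / (n * Mv i) else 0) = 0 := by
      intro i j
      rw [if_neg]
      intro hc
      have hmem : (i, j) ∈ A := by
        rw [hA, Finset.mem_filter]
        exact ⟨Finset.mem_univ _, hc⟩
      rw [hAe] at hmem
      exact absurd hmem (Finset.notMem_empty _)
    simp only [hz, Finset.sum_const_zero]
    linarith
  · obtain ⟨p0, hp0A, hp0min⟩ := A.exists_min_image (fun p => s p.1 p.2) hAne
    have hp0 : (p0.2 : ℕ) < Mv p0.1 ∧ β ≤ rkq n N Mv s (s p0.1 p0.2) := by
      rw [hA, Finset.mem_filter] at hp0A; exact hp0A.2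
    have key : ∀ (i : Fin n) (j : Fin N),
        (if (j : ℕ) < Mv i ∧ β ≤ rkq n N Mv s (s i j) then (1 : ℝ) / (n * Mv i) else 0)
        + (if (j : ℕ) < Mv i ∧ s i j < s p0.1 p0.2 then (1 : ℝ) / (n * Mv i) else 0)
        ≤ (if (j : ℕ) < Mv i then (1 : ℝ) / (n * Mv i) else 0) := by
      intro i j
      have hw0 : (0:ℝ) ≤ 1 / (n * Mv i) := by positivity
      by_cases h1 : (j : ℕ) < Mv i ∧ β ≤ rkq n N Mv s (s i j)
      · have hmem : (i, j) ∈ A := by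
          rw [hA, Finset.mem_filter]; exact ⟨Finset.mem_univ _, h1⟩
        have hge := hp0min (i, j) hmem
        have hns : ¬ ((j : ℕ) < Mv i ∧ s i j < s p0.1 p0.2) :=
          fun hc => absurd hge (not_le.mpr hc.2)
        rw [if_pos h1, if_neg hns, if_pos h1.1, add_zero]
      · rw [if_neg h1, zero_add]
        by_cases h2 : (j : ℕ) < Mv i ∧ s i j < s p0.1 p0.2
        · rw [if_pos h2, if_pos h2.1]
        · rw [if_neg h2]
          split_ifs with h3
          · exact hw0
          · exact le_refl 0
    have hsplit :
        (∑ i : Fin n, ∑ j : Fin N,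
          (if (j : ℕ) < Mv i ∧ β ≤ rkq n N Mv s (s i j) then (1 : ℝ) / (n * Mv i) else 0))
        + (∑ i : Fin n, ∑ j : Fin N,
          (if (j : ℕ) < Mv i ∧ s i j < s p0.1 p0.2 then (1 : ℝ) / (n * Mv i) else 0)) ≤ 1 := by
      calc _ = ∑ i : Fin n, ∑ j : Fin N,
            ((if (j : ℕ) < Mv i ∧ β ≤ rkq n N Mv s (s i j) then (1 : ℝ) / (n * Mv i) else 0)
            + (if (j : ℕ) < Mv i ∧ s i j < s p0.1 p0.2 then (1 : ℝ) / (n * Mv i) else 0)) := by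
              rw [← Finset.sum_add_distrib]
              exact Finset.sum_congr rfl (fun i _ => (Finset.sum_add_distrib).symm)
        _ ≤ ∑ i : Fin n, ∑ j : Fin N, (if (j : ℕ) < Mv i then (1 : ℝ) / (n * Mv i) else 0) :=
              Finset.sum_le_sum (fun i _ => Finset.sum_le_sum (fun j _ => key i j))
        _ = 1 := sum_weights hn Mv hM1 hM2
    have hβrk : β ≤ ∑ i : Fin n, ∑ j : Fin N,
        (if (j : ℕ) < Mv i ∧ s i j < s p0.1 p0.2 then (1 : ℝ) / (n * Mv i) else 0) := hp0.2
    linarith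



lemma pi_map_comp_perm {n : ℕ} {E : Type*} [MeasurableSpace E] (μ0 : Measure E)
    [IsProbabilityMeasure μ0] (e : Equiv.Perm (Fin n)) :
    (Measure.pi (fun _ : Fin n => μ0)).map (fun x : Fin n → E => fun i => x (e i))
      = Measure.pi (fun _ : Fin n => μ0) := by
  refine (Measure.pi_eq fun s hs => ?_).symm
  have hme : Measurable fun (x : Fin n → E) i => x (e i) :=
    measurable_pi_lambda _ (fun i => measurable_pi_apply (e i))
  rw [Measure.map_apply hme (MeasurableSet.univ_pi hs)]
  have hpre : (fun (x : Fin n → E) i => x (e i)) ⁻¹' (Set.univ.pi s)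
      = Set.univ.pi (fun k => s (e.symm k)) := by
    ext x
    simp only [Set.mem_preimage, Set.mem_pi, Set.mem_univ, true_implies]
    constructor
    · intro h k
      have := h (e.symm k); simpa using this
    · intro h i
      have := h (e i); simpa using this
  rw [hpre, Measure.pi_pi]
  exact Equiv.prod_comp e.symm fun i => μ0 (s i)

lemma prod_restrict_invariance {E F : Type*} [MeasurableSpace E] [MeasurableSpace F]
    (μ0 : Measure E) (ν' : Measure F) [IsProbabilityMeasure μ0] [IsProbabilityMeasure ν']
    (T : E → E) (hT : Measurable T) (Aμ : Set E) (hAμ : MeasurableSet Aμ)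
    (hinv : ∀ V : Set E, MeasurableSet V → μ0 (T ⁻¹' V ∩ Aμ) = μ0 (V ∩ Aμ))
    (Z : Set (E × F)) (hZ : MeasurableSet Z) :
    (μ0.prod ν') ((fun p : E × F => (T p.1, p.2)) ⁻¹' Z ∩ Aμ ×ˢ Set.univ)
      = (μ0.prod ν') (Z ∩ Aμ ×ˢ Set.univ) := by
  have hmapres : (μ0.restrict Aμ).map T = μ0.restrict Aμ := by
    refine Measure.ext fun V hV => ?_
    rw [Measure.map_apply hT hV, Measure.restrict_apply hV, Measure.restrict_apply (hT hV),
      hinv V hV]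
  have hG : Measurable fun p : E × F => (T p.1, p.2) :=
    (hT.comp measurable_fst).prodMk measurable_snd
  have hh : Measurable fun a : E => ν' (Prod.mk a ⁻¹' Z) :=
    measurable_measure_prodMk_left hZ
  rw [Measure.prod_apply ((hG hZ).inter (hAμ.prod MeasurableSet.univ)),
    Measure.prod_apply (hZ.inter (hAμ.prod MeasurableSet.univ))]
  have hsec1 : ∀ a : E, ν' (Prod.mk a ⁻¹' ((fun p : E × F => (T p.1, p.2)) ⁻¹' Z ∩ Aμ ×ˢ Set.univ))
      = Aμ.indicator (fun a => ν' (Prod.mk (T a) ⁻¹' Z)) a := by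
    intro a
    by_cases ha : a ∈ Aμ
    · rw [Set.indicator_of_mem ha]
      congr 1
      ext y
      simp [ha]
    · rw [Set.indicator_of_notMem ha,
        show (Prod.mk a ⁻¹' ((fun p : E × F => (T p.1, p.2)) ⁻¹' Z ∩ Aμ ×ˢ Set.univ)) = (∅ : Set F)
          from by ext y; simp [ha], measure_empty]
  have hsec2 : ∀ a : E, ν' (Prod.mk a ⁻¹' (Z ∩ Aμ ×ˢ Set.univ))
      = Aμ.indicator (fun a => ν' (Prod.mk a ⁻¹' Z)) a := by
    intro a
    by_cases ha : a ∈ Aμ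
    · rw [Set.indicator_of_mem ha]
      congr 1
      ext y
      simp [ha]
    · rw [Set.indicator_of_notMem ha,
        show (Prod.mk a ⁻¹' (Z ∩ Aμ ×ˢ Set.univ)) = (∅ : Set F)
          from by ext y; simp [ha], measure_empty]
  simp_rw [hsec1, hsec2]
  rw [lintegral_indicator hAμ, lintegral_indicator hAμ]
  calc ∫⁻ a in Aμ, ν' (Prod.mk (T a) ⁻¹' Z) ∂μ0
      = ∫⁻ a, ν' (Prod.mk a ⁻¹' Z) ∂((μ0.restrict Aμ).map T) := (lintegral_map hh hT).symm
    _ = ∫⁻ a in Aμ, ν' (Prod.mk a ⁻¹' Z) ∂μ0 := by rw [hmapres]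

/-- Lift restricted invariance of the last coordinate to the product measure. -/
lemma pi_restrict_invariance_last {m : ℕ} {E : Type*} [MeasurableSpace E] (μ0 : Measure E)
    [IsProbabilityMeasure μ0] (T : E → E) (hT : Measurable T) (Aμ : Set E)
    (hAμ : MeasurableSet Aμ)
    (hinv : ∀ V : Set E, MeasurableSet V → μ0 (T ⁻¹' V ∩ Aμ) = μ0 (V ∩ Aμ))
    (W : Set (Fin (m + 1) → E)) (hW : MeasurableSet W) :
    Measure.pi (fun _ : Fin (m + 1) => μ0)
        ((fun x => Function.update x (Fin.last m) (T (x (Fin.last m)))) ⁻¹' W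
          ∩ ((fun x => x (Fin.last m)) ⁻¹' Aμ))
      = Measure.pi (fun _ : Fin (m + 1) => μ0) (W ∩ ((fun x => x (Fin.last m)) ⁻¹' Aμ)) := by
  set ν : Measure (Fin (m + 1) → E) := Measure.pi (fun _ : Fin (m + 1) => μ0) with hνdef
  set φ := MeasurableEquiv.piFinSuccAbove (fun _ : Fin (m + 1) => E) (Fin.last m) with hφdef
  have hφ := measurePreserving_piFinSuccAbove (fun _ : Fin (m + 1) => μ0) (Fin.last m)
  set ρ := μ0.prod (Measure.pi fun _ : Fin m => μ0) with hρdef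
  have hνρ : ∀ U : Set (Fin (m + 1) → E), MeasurableSet U → ν U = ρ (φ.symm ⁻¹' U) := by
    intro U hU
    have h1 : ρ (φ.symm ⁻¹' U) = (ν.map φ) (φ.symm ⁻¹' U) := by rw [hφ.map_eq]
    rw [h1, Measure.map_apply φ.measurable (φ.symm.measurable hU)]
    congr 1
    ext x
    simp
  -- key pointwise fact : update commutes with φ.symm
  have hupd : ∀ (a : E) (y : Fin m → E),
      Function.update (φ.symm (a, y)) (Fin.last m) (T a) = φ.symm (T a, y) := by
    intro a y
    have hs : ∀ (b : E), φ.symm (b, y) = (Fin.last m).insertNth b y := by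
      intro b
      rfl
    rw [hs, hs]
    ext i
    induction i using Fin.lastCases with
    | last => rw [Function.update_self, Fin.insertNth_apply_same]
    | cast j =>
        rw [Function.update_of_ne (Fin.castSucc_lt_last j).ne]
        rw [← Fin.succAbove_last_apply j, Fin.insertNth_apply_succAbove,
          Fin.insertNth_apply_succAbove]
  have hlastφ : ∀ x : Fin (m + 1) → E, (φ x).1 = x (Fin.last m) := fun x => rfl
  have hsymmlast : ∀ (a : E) (y : Fin m → E), (φ.symm (a, y)) (Fin.last m) = a := by
    intro a y
    have : φ.symm (a, y) = (Fin.last m).insertNth a y := rfl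
    rw [this, Fin.insertNth_apply_same]
  have hset1 : φ.symm ⁻¹'
      ((fun x => Function.update x (Fin.last m) (T (x (Fin.last m)))) ⁻¹' W
        ∩ ((fun x => x (Fin.last m)) ⁻¹' Aμ))
      = (fun p : E × (Fin m → E) => (T p.1, p.2)) ⁻¹' (φ.symm ⁻¹' W) ∩ Aμ ×ˢ Set.univ := by
    ext ⟨a, y⟩
    simp only [Set.mem_preimage, Set.mem_inter_iff, Set.mem_prod, Set.mem_univ, and_true]
    rw [hsymmlast a y, hupd a y]
  have hset2 : φ.symm ⁻¹' (W ∩ ((fun x => x (Fin.last m)) ⁻¹' Aμ))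
      = (φ.symm ⁻¹' W) ∩ Aμ ×ˢ Set.univ := by
    ext ⟨a, y⟩
    simp only [Set.mem_preimage, Set.mem_inter_iff, Set.mem_prod, Set.mem_univ, and_true]
    rw [hsymmlast a y]
  have hupdmeas : Measurable fun x : Fin (m + 1) → E =>
      Function.update x (Fin.last m) (T (x (Fin.last m))) := by
    apply measurable_pi_lambda
    intro i
    by_cases hi : i = Fin.last m
    · subst hi
      simpa [Function.update_self, Function.comp_def] using hT.comp (measurable_pi_apply (Fin.last m))
    · simpa [Function.update_of_ne hi] using measurable_pi_apply i
  have hAset : MeasurableSet ((fun x : Fin (m + 1) → E => x (Fin.last m)) ⁻¹' Aμ) :=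
    (measurable_pi_apply (Fin.last m)) hAμ
  rw [hνρ _ ((hupdmeas hW).inter hAset), hνρ _ (hW.inter hAset), hset1, hset2]
  exact prod_restrict_invariance μ0 _ T hT Aμ hAμ hinv _ (φ.symm.measurable hW)

/-- within-cluster exchangeability transported to the cluster law `μ0`. -/
lemma mu0_invariance {Ω : Type*} [MeasurableSpace Ω] {P : Measure Ω} [IsProbabilityMeasure P]
    {Mmax : ℕ} (Mf : Ω → ℕ) (Sf : Ω → Fin Mmax → ℝ) (hM : Measurable Mf) (hS : Measurable Sf)
    (μ : ℕ) (σ : Equiv.Perm (Fin Mmax))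
    (hex : 0 < P {ω | Mf ω = μ} →
      Measure.map (fun ω (j : Fin Mmax) => Sf ω (σ j)) P[|{ω | Mf ω = μ}]
        = Measure.map (fun ω (j : Fin Mmax) => Sf ω j) P[|{ω | Mf ω = μ}])
    (V : Set (ℕ × (Fin Mmax → ℝ))) (hV : MeasurableSet V) :
    P.map (fun ω => (Mf ω, Sf ω))
        ((fun p : ℕ × (Fin Mmax → ℝ) => (p.1, fun j => p.2 (σ j))) ⁻¹' V ∩ {p | p.1 = μ})
      = P.map (fun ω => (Mf ω, Sf ω)) (V ∩ {p | p.1 = μ}) := by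
  have hX : Measurable fun ω => (Mf ω, Sf ω) := hM.prodMk hS
  have hA : MeasurableSet {ω | Mf ω = μ} := hM (measurableSet_singleton μ)
  set U : Set (Fin Mmax → ℝ) := Prod.mk μ ⁻¹' V with hUdef
  have hU : MeasurableSet U := measurable_prodMk_left hV
  have hTσ : Measurable fun p : ℕ × (Fin Mmax → ℝ) => (p.1, fun j => p.2 (σ j)) :=
    measurable_fst.prodMk
      (measurable_pi_lambda _ fun j => (measurable_pi_apply (σ j)).comp measurable_snd)
  have hgσ : Measurable fun ω (j : Fin Mmax) => Sf ω (σ j) :=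
    measurable_pi_lambda _ fun j => (measurable_pi_apply (σ j)).comp hS
  have hAμ' : MeasurableSet {p : ℕ × (Fin Mmax → ℝ) | p.1 = μ} :=
    measurable_fst (measurableSet_singleton μ)
  rw [Measure.map_apply hX ((hTσ hV).inter hAμ'), Measure.map_apply hX (hV.inter hAμ')]
  have hE1 : (fun ω => (Mf ω, Sf ω)) ⁻¹'
      ((fun p : ℕ × (Fin Mmax → ℝ) => (p.1, fun j => p.2 (σ j))) ⁻¹' V ∩ {p | p.1 = μ})
      = {ω | Mf ω = μ} ∩ ((fun ω (j : Fin Mmax) => Sf ω (σ j)) ⁻¹' U) := by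
    ext ω
    simp only [Set.mem_preimage, Set.mem_inter_iff, Set.mem_setOf_eq, hUdef]
    constructor
    · rintro ⟨hv, hμ⟩
      refine ⟨hμ, ?_⟩
      rwa [← hμ]
    · rintro ⟨hμ, hv⟩
      rw [hμ]
      exact ⟨hv, rfl⟩
  have hE2 : (fun ω => (Mf ω, Sf ω)) ⁻¹' (V ∩ {p | p.1 = μ})
      = {ω | Mf ω = μ} ∩ ((fun ω (j : Fin Mmax) => Sf ω j) ⁻¹' U) := by
    ext ω
    simp only [Set.mem_preimage, Set.mem_inter_iff, Set.mem_setOf_eq, hUdef]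
    constructor
    · rintro ⟨hv, hμ⟩
      refine ⟨hμ, ?_⟩
      rwa [← hμ]
    · rintro ⟨hμ, hv⟩
      rw [hμ]
      exact ⟨hv, rfl⟩
  rw [hE1, hE2]
  by_cases h0 : P {ω | Mf ω = μ} = 0
  · rw [measure_inter_null_of_null_left _ h0, measure_inter_null_of_null_left _ h0]
  · have hpos : 0 < P {ω | Mf ω = μ} := pos_iff_ne_zero.mpr h0
    have hcond : ∀ (g : Ω → Fin Mmax → ℝ), Measurable g →
        P ({ω | Mf ω = μ} ∩ g ⁻¹' U)
          = P {ω | Mf ω = μ} * (P[|{ω | Mf ω = μ}]).map g U := by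
      intro g hg
      rw [Measure.map_apply hg hU, cond_apply hA P (g ⁻¹' U), ← mul_assoc,
        ENNReal.mul_inv_cancel h0 (measure_ne_top P _), one_mul]
    have hg2 : Measurable fun ω (j : Fin Mmax) => Sf ω j := hS
    rw [hcond _ hgσ, hcond (fun ω (j : Fin Mmax) => Sf ω j) hg2, hex hpos]


end WCCaux

open WCCaux in
/-- Core coverage guarantee in the proof of Theorem 2: with i.i.d. clusters
`(M_i, S_i)`, within-cluster exchangeability of the first `M_i` scores conditional on
the cluster size `M_i`, and the cluster-weighted empirical CDF
`F̂(t) = (1/(m+1)) Σ_i (1/M_i) Σ_{j<M_i} 1{S_{i,j} ≤ t}`, the first score of the last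
cluster is at most `q̂ = inf{t : F̂(t) ≥ 1 − α}` with probability at least `1 − α`. -/
theorem weighted_conformal_coverage
    {Ω : Type*} [MeasurableSpace Ω] {P : Measure Ω} [IsProbabilityMeasure P]
    (Mmax m : ℕ) (hMmax : 1 ≤ Mmax) (hm : 1 ≤ m)
    (M : Fin (m + 1) → Ω → ℕ) (S : Fin (m + 1) → Ω → (Fin Mmax → ℝ))
    (hMmeas : ∀ i, Measurable (M i)) (hSmeas : ∀ i, Measurable (S i))
    (hrange : ∀ i ω, M i ω ∈ Set.Icc 1 Mmax)
    (hindep : iIndepFun (fun i ω => (M i ω, S i ω)) P)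
    (hident : ∀ i i' : Fin (m + 1),
      IdentDistrib (fun ω => (M i ω, S i ω)) (fun ω => (M i' ω, S i' ω)) P P)
    (hexch : ∀ i : Fin (m + 1), ∀ μ ∈ Set.Icc 1 Mmax, 0 < P {ω | M i ω = μ} →
      ∀ σ : Equiv.Perm (Fin Mmax), (∀ j : Fin Mmax, μ ≤ (j : ℕ) → σ j = j) →
        Measure.map (fun ω (j : Fin Mmax) => S i ω (σ j)) P[|{ω | M i ω = μ}]
          = Measure.map (fun ω j => S i ω j) P[|{ω | M i ω = μ}])
    (α : ℝ) (hα : α ∈ Set.Ioo (0 : ℝ) 1) :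
    ENNReal.ofReal (1 - α) ≤
      P {ω | S (Fin.last m) ω ⟨0, hMmax⟩ ≤
        sInf {t : ℝ | 1 - α ≤ (1 / (m + 1 : ℝ)) * ∑ i : Fin (m + 1),
          (1 / (M i ω : ℝ)) * ∑ j : Fin Mmax,
            (if (j : ℕ) < M i ω ∧ S i ω j ≤ t then (1 : ℝ) else 0)}} := by
  classical
  obtain ⟨hα0, hα1⟩ := hα
  set β : ℝ := 1 - α with hβdef
  have hβ0 : (0:ℝ) < β := by rw [hβdef]; linarith
  have hβ1 : β ≤ 1 := by rw [hβdef]; linarith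
  set lst : Fin (m + 1) := Fin.last m with hlstdef
  set zj : Fin Mmax := ⟨0, hMmax⟩ with hzjdef
  have hXmeas : ∀ i : Fin (m + 1), Measurable ((fun i ω => (M i ω, S i ω)) i) :=
    fun i => (hMmeas i).prodMk (hSmeas i)
  set Y : Ω → (Fin (m + 1) → ℕ × (Fin Mmax → ℝ)) := fun ω i => (M i ω, S i ω) with hYdef
  have hYmeas : Measurable Y := measurable_pi_lambda _ hXmeas
  set μ0 : Measure (ℕ × (Fin Mmax → ℝ)) :=
    P.map (fun ω => (M lst ω, S lst ω)) with hμ0def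
  haveI : IsProbabilityMeasure μ0 := Measure.isProbabilityMeasure_map (hXmeas lst).aemeasurable
  set ν : Measure (Fin (m + 1) → ℕ × (Fin Mmax → ℝ)) :=
    Measure.pi (fun _ : Fin (m + 1) => μ0) with hνdef
  have hmapY : P.map Y = ν :=
    map_joint_eq_pi P (fun i ω => (M i ω, S i ω)) hXmeas hindep lst
      (fun i => (hident i lst).map_eq)
  have hYB : ∀ W : Set (Fin (m + 1) → ℕ × (Fin Mmax → ℝ)), MeasurableSet W →
      P (Y ⁻¹' W) = ν W := by
    intro W hW
    rw [← hmapY, Measure.map_apply hYmeas hW]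
  -- abbreviations
  have hBmeas : ∀ (i : Fin (m + 1)) (j : Fin Mmax),
      MeasurableSet (Bset (m + 1) Mmax β i j) := measurableSet_Bset (m + 1) Mmax β
  have hABmeas : ∀ (i : Fin (m + 1)) (μ : ℕ) (j : Fin Mmax),
      MeasurableSet (Bset (m + 1) Mmax β i j ∩ Ai (m + 1) Mmax i μ) :=
    fun i μ j => (hBmeas i j).inter (measurableSet_Ai _ _ i μ)
  -- cross-cluster exchange
  have Eq2 : ∀ (i : Fin (m + 1)) (μ : ℕ) (j : Fin Mmax),
      ν (Bset (m + 1) Mmax β i j ∩ Ai (m + 1) Mmax i μ)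
        = ν (Bset (m + 1) Mmax β lst j ∩ Ai (m + 1) Mmax lst μ) := by
    intro i μ j
    set e : Equiv.Perm (Fin (m + 1)) := Equiv.swap i lst with hedef
    have hg : Measurable fun (x : Fin (m + 1) → ℕ × (Fin Mmax → ℝ)) k => x (e k) :=
      measurable_pi_lambda _ fun k => measurable_pi_apply (e k)
    have hset : (fun (x : Fin (m + 1) → ℕ × (Fin Mmax → ℝ)) k => x (e k)) ⁻¹'
        (Bset (m + 1) Mmax β lst j ∩ Ai (m + 1) Mmax lst μ)
        = Bset (m + 1) Mmax β i j ∩ Ai (m + 1) Mmax i μ := by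
      ext x
      simp only [Set.mem_preimage, Set.mem_inter_iff, Bset, Ai, Set.mem_setOf_eq]
      rw [rkx_comp_perm e x, show e lst = i from Equiv.swap_apply_right i lst]
    calc ν (Bset (m + 1) Mmax β i j ∩ Ai (m + 1) Mmax i μ)
        = ν ((fun x k => x (e k)) ⁻¹' (Bset (m + 1) Mmax β lst j ∩ Ai (m + 1) Mmax lst μ)) := by
          rw [hset]
      _ = (ν.map (fun x k => x (e k)))
            (Bset (m + 1) Mmax β lst j ∩ Ai (m + 1) Mmax lst μ) := by
          rw [Measure.map_apply hg (hABmeas lst μ j)]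
      _ = ν (Bset (m + 1) Mmax β lst j ∩ Ai (m + 1) Mmax lst μ) := by
          rw [hνdef, pi_map_comp_perm μ0 e]
  -- within-cluster exchange
  have Eq3 : ∀ μ, μ ∈ Set.Icc 1 Mmax → ∀ j : Fin Mmax, (j : ℕ) < μ →
      ν (Bset (m + 1) Mmax β lst j ∩ Ai (m + 1) Mmax lst μ)
        = ν (Bset (m + 1) Mmax β lst zj ∩ Ai (m + 1) Mmax lst μ) := by
    intro μ hμIcc j hjμ
    set σ : Equiv.Perm (Fin Mmax) := Equiv.swap zj j with hσdef
    have hfix : ∀ k : Fin Mmax, μ ≤ (k : ℕ) → σ k = k := by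
      intro k hk
      apply Equiv.swap_apply_of_ne_of_ne
      · intro hkz
        rw [hkz] at hk
        simp only [hzjdef] at hk
        omega
      · intro hkj
        rw [hkj] at hk
        omega
    have hσzj : σ zj = j := Equiv.swap_apply_left zj j
    set T : ℕ × (Fin Mmax → ℝ) → ℕ × (Fin Mmax → ℝ) :=
      fun p => (p.1, fun k => p.2 (σ k)) with hTdef
    have hT : Measurable T :=
      measurable_fst.prodMk
        (measurable_pi_lambda _ fun k => (measurable_pi_apply (σ k)).comp measurable_snd)
    have hinvμ0 : ∀ V : Set (ℕ × (Fin Mmax → ℝ)), MeasurableSet V →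
        μ0 (T ⁻¹' V ∩ {p | p.1 = μ}) = μ0 (V ∩ {p | p.1 = μ}) := by
      intro V hV
      exact mu0_invariance (M lst) (S lst) (hMmeas lst) (hSmeas lst) μ σ
        (fun hpos => hexch lst μ hμIcc hpos σ hfix) V hV
    have hAμ' : MeasurableSet {p : ℕ × (Fin Mmax → ℝ) | p.1 = μ} :=
      measurable_fst (measurableSet_singleton μ)
    have hbridge := pi_restrict_invariance_last μ0 T hT {p | p.1 = μ} hAμ' hinvμ0
      (Bset (m + 1) Mmax β lst zj) (hBmeas lst zj)
    have hAeq : ((fun x : Fin (m + 1) → ℕ × (Fin Mmax → ℝ) => x (Fin.last m)) ⁻¹'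
        {p | p.1 = μ}) = Ai (m + 1) Mmax lst μ := rfl
    rw [hAeq] at hbridge
    have hset : (fun x : Fin (m + 1) → ℕ × (Fin Mmax → ℝ) =>
          Function.update x (Fin.last m) (T (x (Fin.last m)))) ⁻¹'
          (Bset (m + 1) Mmax β lst zj) ∩ Ai (m + 1) Mmax lst μ
        = Bset (m + 1) Mmax β lst j ∩ Ai (m + 1) Mmax lst μ := by
      ext x
      simp only [Set.mem_preimage, Set.mem_inter_iff, Bset, Ai, Set.mem_setOf_eq]
      have hval : (T (x (Fin.last m))).2 zj = (x lst).2 j := by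
        simp only [hTdef]
        rw [hσzj]
      constructor
      · rintro ⟨hB, hA⟩
        refine ⟨?_, hA⟩
        rw [Function.update_self] at hB
        rw [rkx_update lst σ μ hfix x hA] at hB
        rwa [hval] at hB
      · rintro ⟨hB, hA⟩
        refine ⟨?_, hA⟩
        rw [Function.update_self]
        rw [rkx_update lst σ μ hfix x hA]
        rwa [hval]
    rw [← hset, ← hbridge]
  -- partition over cluster size
  have hparts : P (Y ⁻¹' Bset (m + 1) Mmax β lst zj)
      = ∑ μ ∈ Finset.Icc 1 Mmax,
          P (Y ⁻¹' (Bset (m + 1) Mmax β lst zj ∩ Ai (m + 1) Mmax lst μ)) := by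
    have hU : Y ⁻¹' Bset (m + 1) Mmax β lst zj
        = ⋃ μ ∈ Finset.Icc 1 Mmax,
            Y ⁻¹' (Bset (m + 1) Mmax β lst zj ∩ Ai (m + 1) Mmax lst μ) := by
      ext ω
      simp only [Set.mem_preimage, Set.mem_iUnion, Set.mem_inter_iff, exists_prop]
      constructor
      · intro h
        refine ⟨M lst ω, ?_, h, ?_⟩
        · have := hrange lst ω
          rw [Set.mem_Icc] at this
          exact Finset.mem_Icc.mpr this
        · rfl
      · rintro ⟨μ, _, h, _⟩
        exact h
    rw [hU, measure_biUnion_finset ?_ ?_]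
    · intro μ1 h1 μ2 h2 hne
      simp only [Function.onFun]
      rw [Set.disjoint_left]
      intro ω hω1 hω2
      exact hne ((hω1.2 : (Y ω lst).1 = μ1).symm.trans (hω2.2 : (Y ω lst).1 = μ2))
    · intro μ _
      exact hYmeas (hABmeas lst μ zj)
  -- collapse the within-cluster sum using Eq2 and Eq3
  have hn1ne0 : ((m + 1 : ℕ) : ℝ≥0∞) ≠ 0 :=
    Nat.cast_ne_zero.mpr (Nat.succ_ne_zero m)
  have hn1netop : ((m + 1 : ℕ) : ℝ≥0∞) ≠ ⊤ := ENNReal.natCast_ne_top _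
  have hsumj : ∀ μ ∈ Finset.Icc 1 Mmax, ∀ i : Fin (m + 1),
      ∑ j : Fin Mmax, (if (j : ℕ) < μ then (((m + 1 : ℕ) : ℝ≥0∞) * μ)⁻¹ else 0)
          * P (Y ⁻¹' (Bset (m + 1) Mmax β i j ∩ Ai (m + 1) Mmax i μ))
        = ((m + 1 : ℕ) : ℝ≥0∞)⁻¹
            * P (Y ⁻¹' (Bset (m + 1) Mmax β lst zj ∩ Ai (m + 1) Mmax lst μ)) := by
    intro μ hμ i
    obtain ⟨hμ1, hμ2⟩ := Finset.mem_Icc.mp hμ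
    have hμIcc : μ ∈ Set.Icc 1 Mmax := Set.mem_Icc.mpr ⟨hμ1, hμ2⟩
    have hμne0 : ((μ : ℕ) : ℝ≥0∞) ≠ 0 := by
      simp only [ne_eq, Nat.cast_eq_zero]
      omega
    have hμnetop : ((μ : ℕ) : ℝ≥0∞) ≠ ⊤ := ENNReal.natCast_ne_top _
    have hterm : ∀ j : Fin Mmax,
        (if (j : ℕ) < μ then (((m + 1 : ℕ) : ℝ≥0∞) * μ)⁻¹ else 0)
            * P (Y ⁻¹' (Bset (m + 1) Mmax β i j ∩ Ai (m + 1) Mmax i μ))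
        = (if (j : ℕ) < μ then
            (((m + 1 : ℕ) : ℝ≥0∞) * μ)⁻¹
              * P (Y ⁻¹' (Bset (m + 1) Mmax β lst zj ∩ Ai (m + 1) Mmax lst μ))
          else 0) := by
      intro j
      by_cases hj : (j : ℕ) < μ
      · rw [if_pos hj, if_pos hj]
        congr 1
        rw [hYB _ (hABmeas i μ j), hYB _ (hABmeas lst μ zj), Eq2 i μ j, Eq3 μ hμIcc j hj]
      · rw [if_neg hj, if_neg hj, zero_mul]
    rw [Finset.sum_congr rfl fun j _ => hterm j, ← Finset.sum_filter, Finset.sum_const,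
      card_filter_lt hμ2, nsmul_eq_mul, ← mul_assoc]
    congr 1
    rw [mul_comm ((m + 1 : ℕ) : ℝ≥0∞) (μ : ℝ≥0∞),
      ENNReal.mul_inv (Or.inl hμne0) (Or.inl hμnetop), ← mul_assoc,
      ENNReal.mul_inv_cancel hμne0 hμnetop, one_mul]
  -- flatten
  have hflat : P (Y ⁻¹' Bset (m + 1) Mmax β lst zj)
      = ∑ i : Fin (m + 1), ∑ μ ∈ Finset.Icc 1 Mmax, ∑ j : Fin Mmax,
          (if (j : ℕ) < μ then (((m + 1 : ℕ) : ℝ≥0∞) * μ)⁻¹ else 0)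
            * P (Y ⁻¹' (Bset (m + 1) Mmax β i j ∩ Ai (m + 1) Mmax i μ)) := by
    have h1 : ∀ i : Fin (m + 1),
        ∑ μ ∈ Finset.Icc 1 Mmax, ∑ j : Fin Mmax,
          (if (j : ℕ) < μ then (((m + 1 : ℕ) : ℝ≥0∞) * μ)⁻¹ else 0)
            * P (Y ⁻¹' (Bset (m + 1) Mmax β i j ∩ Ai (m + 1) Mmax i μ))
        = ((m + 1 : ℕ) : ℝ≥0∞)⁻¹ * P (Y ⁻¹' Bset (m + 1) Mmax β lst zj) := by
      intro i
      rw [Finset.sum_congr rfl fun μ hμ => hsumj μ hμ i, ← Finset.mul_sum, ← hparts]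
    rw [Finset.sum_congr rfl fun i _ => h1 i, Finset.sum_const, Finset.card_univ,
      Fintype.card_fin, nsmul_eq_mul, ← mul_assoc,
      ENNReal.mul_inv_cancel hn1ne0 hn1netop, one_mul]
  -- rewrite as a lintegral
  have hEmeas : ∀ (i : Fin (m + 1)) (μ : ℕ) (j : Fin Mmax),
      MeasurableSet (Y ⁻¹' (Bset (m + 1) Mmax β i j ∩ Ai (m + 1) Mmax i μ)) :=
    fun i μ j => hYmeas (hABmeas i μ j)
  have hlint : ∫⁻ ω, (∑ i : Fin (m + 1), ∑ μ ∈ Finset.Icc 1 Mmax, ∑ j : Fin Mmax,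
        (Y ⁻¹' (Bset (m + 1) Mmax β i j ∩ Ai (m + 1) Mmax i μ)).indicator
          (fun _ => if (j : ℕ) < μ then (((m + 1 : ℕ) : ℝ≥0∞) * μ)⁻¹ else 0) ω) ∂P
      = ∑ i : Fin (m + 1), ∑ μ ∈ Finset.Icc 1 Mmax, ∑ j : Fin Mmax,
          (if (j : ℕ) < μ then (((m + 1 : ℕ) : ℝ≥0∞) * μ)⁻¹ else 0)
            * P (Y ⁻¹' (Bset (m + 1) Mmax β i j ∩ Ai (m + 1) Mmax i μ)) := by
    rw [lintegral_finset_sum _ (fun i _ => Finset.measurable_sum _ fun μ _ =>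
      Finset.measurable_sum _ fun j _ => measurable_const.indicator (hEmeas i μ j))]
    refine Finset.sum_congr rfl fun i _ => ?_
    rw [lintegral_finset_sum _ (fun μ _ =>
      Finset.measurable_sum _ fun j _ => measurable_const.indicator (hEmeas i μ j))]
    refine Finset.sum_congr rfl fun μ _ => ?_
    rw [lintegral_finset_sum _ (fun j _ => measurable_const.indicator (hEmeas i μ j))]
    exact Finset.sum_congr rfl fun j _ => lintegral_indicator_const (hEmeas i μ j) _
  -- pointwise bound by the deterministic lemma
  have hpoint : ∀ ω, (∑ i : Fin (m + 1), ∑ μ ∈ Finset.Icc 1 Mmax, ∑ j : Fin Mmax,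
        (Y ⁻¹' (Bset (m + 1) Mmax β i j ∩ Ai (m + 1) Mmax i μ)).indicator
          (fun _ => if (j : ℕ) < μ then (((m + 1 : ℕ) : ℝ≥0∞) * μ)⁻¹ else 0) ω)
      ≤ ENNReal.ofReal α := by
    intro ω
    have hMω1 : ∀ i : Fin (m + 1), 1 ≤ (Y ω i).1 := fun i => (hrange i ω).1
    have hMω2 : ∀ i : Fin (m + 1), (Y ω i).1 ≤ Mmax := fun i => (hrange i ω).2
    have hind : ∀ (i : Fin (m + 1)) (μ : ℕ) (j : Fin Mmax),
        (Y ⁻¹' (Bset (m + 1) Mmax β i j ∩ Ai (m + 1) Mmax i μ)).indicator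
          (fun _ => if (j : ℕ) < μ then (((m + 1 : ℕ) : ℝ≥0∞) * μ)⁻¹ else 0) ω
        = if ((Y ω i).1 = μ ∧ ((j : ℕ) < μ ∧
              β ≤ rkx (m + 1) Mmax (Y ω) ((Y ω i).2 j)))
            then (((m + 1 : ℕ) : ℝ≥0∞) * μ)⁻¹ else 0 := by
      intro i μ j
      rw [Set.indicator_apply]
      by_cases hmem : ω ∈ Y ⁻¹' (Bset (m + 1) Mmax β i j ∩ Ai (m + 1) Mmax i μ)
      · rw [if_pos hmem]
        obtain ⟨hb, ha⟩ := hmem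
        by_cases hj : (j : ℕ) < μ
        · rw [if_pos hj, if_pos ⟨ha, hj, hb⟩]
        · rw [if_neg hj, if_neg fun hc => hj hc.2.1]
      · rw [if_neg hmem, if_neg]
        intro hc
        exact hmem ⟨hc.2.2, hc.1⟩
    have hμcol : ∀ (i : Fin (m + 1)) (j : Fin Mmax),
        (∑ μ ∈ Finset.Icc 1 Mmax,
          if ((Y ω i).1 = μ ∧ ((j : ℕ) < μ ∧
              β ≤ rkx (m + 1) Mmax (Y ω) ((Y ω i).2 j)))
            then (((m + 1 : ℕ) : ℝ≥0∞) * μ)⁻¹ else 0)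
        = if ((j : ℕ) < (Y ω i).1 ∧ β ≤ rkx (m + 1) Mmax (Y ω) ((Y ω i).2 j))
            then (((m + 1 : ℕ) : ℝ≥0∞) * ((Y ω i).1 : ℕ))⁻¹ else 0 := by
      intro i j
      have h0 : ∀ b ∈ Finset.Icc 1 Mmax, b ≠ (Y ω i).1 →
          (if ((Y ω i).1 = b ∧ ((j : ℕ) < b ∧
              β ≤ rkx (m + 1) Mmax (Y ω) ((Y ω i).2 j)))
            then (((m + 1 : ℕ) : ℝ≥0∞) * b)⁻¹ else 0) = 0 := by
        intro b _ hb
        split_ifs with hcnd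
        · exact absurd hcnd.1.symm hb
        · rfl
      rw [Finset.sum_eq_single_of_mem ((Y ω i).1)
        (Finset.mem_Icc.mpr ⟨hMω1 i, hMω2 i⟩) h0]
      rw [if_congr (and_iff_right rfl) rfl rfl]
    have hcast : ∀ (i : Fin (m + 1)) (j : Fin Mmax),
        (if ((j : ℕ) < (Y ω i).1 ∧ β ≤ rkx (m + 1) Mmax (Y ω) ((Y ω i).2 j))
            then (((m + 1 : ℕ) : ℝ≥0∞) * ((Y ω i).1 : ℕ))⁻¹ else 0)
        = ENNReal.ofReal
            (if ((j : ℕ) < (Y ω i).1 ∧ β ≤ rkx (m + 1) Mmax (Y ω) ((Y ω i).2 j))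
              then (1 : ℝ) / (((m + 1 : ℕ) : ℝ) * (((Y ω i).1 : ℕ) : ℝ)) else 0) := by
      intro i j
      by_cases hc : ((j : ℕ) < (Y ω i).1 ∧ β ≤ rkx (m + 1) Mmax (Y ω) ((Y ω i).2 j))
      · have hMpos : (0 : ℝ) < (((Y ω i).1 : ℕ) : ℝ) := by
          have := hMω1 i
          exact_mod_cast Nat.lt_of_lt_of_le Nat.zero_lt_one this
        have hppos : (0 : ℝ) < ((m + 1 : ℕ) : ℝ) * (((Y ω i).1 : ℕ) : ℝ) := by
          apply mul_pos _ hMpos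
          exact_mod_cast Nat.succ_pos m
        rw [if_pos hc, if_pos hc, one_div, ENNReal.ofReal_inv_of_pos hppos,
          ENNReal.ofReal_mul (by positivity), ENNReal.ofReal_natCast,
          ENNReal.ofReal_natCast]
      · rw [if_neg hc, if_neg hc, ENNReal.ofReal_zero]
    have hdet : ∑ i : Fin (m + 1), ∑ j : Fin Mmax,
        (if ((j : ℕ) < (Y ω i).1 ∧ β ≤ rkx (m + 1) Mmax (Y ω) ((Y ω i).2 j))
          then (1 : ℝ) / (((m + 1 : ℕ) : ℝ) * (((Y ω i).1 : ℕ) : ℝ)) else 0)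
        ≤ 1 - β :=
      det_bound (Nat.succ_pos m) (fun i' => (Y ω i').1) hMω1 hMω2
        (fun i' j' => (Y ω i').2 j') hβ1
    have hβα : 1 - β = α := by rw [hβdef]; ring
    calc ∑ i : Fin (m + 1), ∑ μ ∈ Finset.Icc 1 Mmax, ∑ j : Fin Mmax,
          (Y ⁻¹' (Bset (m + 1) Mmax β i j ∩ Ai (m + 1) Mmax i μ)).indicator
            (fun _ => if (j : ℕ) < μ then (((m + 1 : ℕ) : ℝ≥0∞) * μ)⁻¹ else 0) ω
        = ∑ i : Fin (m + 1), ∑ j : Fin Mmax,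
            (if ((j : ℕ) < (Y ω i).1 ∧ β ≤ rkx (m + 1) Mmax (Y ω) ((Y ω i).2 j))
              then (((m + 1 : ℕ) : ℝ≥0∞) * ((Y ω i).1 : ℕ))⁻¹ else 0) := by
          refine Finset.sum_congr rfl fun i _ => ?_
          rw [Finset.sum_comm]
          refine Finset.sum_congr rfl fun j _ => ?_
          rw [Finset.sum_congr rfl fun μ _ => hind i μ j, hμcol i j]
      _ = ENNReal.ofReal (∑ i : Fin (m + 1), ∑ j : Fin Mmax,
            (if ((j : ℕ) < (Y ω i).1 ∧ β ≤ rkx (m + 1) Mmax (Y ω) ((Y ω i).2 j))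
              then (1 : ℝ) / (((m + 1 : ℕ) : ℝ) * (((Y ω i).1 : ℕ) : ℝ)) else 0)) := by
          rw [ENNReal.ofReal_sum_of_nonneg fun i _ => Finset.sum_nonneg fun j _ => by
            split_ifs with h
            · positivity
            · exact le_refl 0]
          refine Finset.sum_congr rfl fun i _ => ?_
          rw [ENNReal.ofReal_sum_of_nonneg fun j _ => by
            split_ifs with h
            · positivity
            · exact le_refl 0]
          exact Finset.sum_congr rfl fun j _ => hcast i j
      _ ≤ ENNReal.ofReal α := by
          apply ENNReal.ofReal_le_ofReal
          rw [← hβα]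
          exact hdet
  -- probability bound on the bad event
  have hPB : P (Y ⁻¹' Bset (m + 1) Mmax β lst zj) ≤ ENNReal.ofReal α := by
    rw [hflat, ← hlint]
    calc ∫⁻ ω, (∑ i : Fin (m + 1), ∑ μ ∈ Finset.Icc 1 Mmax, ∑ j : Fin Mmax,
          (Y ⁻¹' (Bset (m + 1) Mmax β i j ∩ Ai (m + 1) Mmax i μ)).indicator
            (fun _ => if (j : ℕ) < μ then (((m + 1 : ℕ) : ℝ≥0∞) * μ)⁻¹ else 0) ω) ∂P
        ≤ ∫⁻ _, ENNReal.ofReal α ∂P := lintegral_mono hpoint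
      _ = ENNReal.ofReal α := by rw [lintegral_const, measure_univ, mul_one]
  -- final inclusion
  have hScompl : (Y ⁻¹' Bset (m + 1) Mmax β lst zj)ᶜ ⊆
      {ω | S (Fin.last m) ω ⟨0, hMmax⟩ ≤
        sInf {t : ℝ | β ≤ (1 / (m + 1 : ℝ)) * ∑ i : Fin (m + 1),
          (1 / (M i ω : ℝ)) * ∑ j : Fin Mmax,
            (if (j : ℕ) < M i ω ∧ S i ω j ≤ t then (1 : ℝ) else 0)}} := by
    intro ω hω
    have hlt : rkx (m + 1) Mmax (Y ω) ((Y ω lst).2 zj) < β :=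
      not_le.mp fun h => hω h
    simp only [Set.mem_setOf_eq]
    obtain ⟨p0, -, hp0⟩ := Finset.exists_max_image
      (Finset.univ : Finset (Fin (m + 1) × Fin Mmax)) (fun p => S p.1 ω p.2)
      ⟨(lst, zj), Finset.mem_univ _⟩
    have hle : ∀ (i : Fin (m + 1)) (j : Fin Mmax), S i ω j ≤ S p0.1 ω p0.2 := fun i j =>
      hp0 (i, j) (Finset.mem_univ _)
    have hMiR : ∀ i : Fin (m + 1), (0 : ℝ) < (M i ω : ℝ) := by
      intro i
      exact_mod_cast Nat.lt_of_lt_of_le Nat.zero_lt_one (hrange i ω).1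
    have ht0 : β ≤ (1 / (m + 1 : ℝ)) * ∑ i : Fin (m + 1),
        (1 / (M i ω : ℝ)) * ∑ j : Fin Mmax,
          (if (j : ℕ) < M i ω ∧ S i ω j ≤ S p0.1 ω p0.2 then (1 : ℝ) else 0) := by
      have hin : ∀ i : Fin (m + 1),
          (∑ j : Fin Mmax, if (j : ℕ) < M i ω ∧ S i ω j ≤ S p0.1 ω p0.2 then (1 : ℝ) else 0)
          = (M i ω : ℝ) := by
        intro i
        rw [Finset.sum_congr rfl fun j _ => if_congr (and_iff_left (hle i j)) rfl rfl,
          ← Finset.sum_filter, Finset.sum_const, card_filter_lt (hrange i ω).2,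
          nsmul_eq_mul, mul_one]
      have : ∑ i : Fin (m + 1), (1 / (M i ω : ℝ)) * ∑ j : Fin Mmax,
          (if (j : ℕ) < M i ω ∧ S i ω j ≤ S p0.1 ω p0.2 then (1 : ℝ) else 0) = (m + 1 : ℝ) := by
        rw [Finset.sum_congr rfl fun i _ => by
          rw [hin i, one_div, inv_mul_cancel₀ (hMiR i).ne']]
        rw [Finset.sum_const, Finset.card_univ, Fintype.card_fin, nsmul_eq_mul, mul_one]
        push_cast
        ring
      rw [this, one_div, inv_mul_cancel₀ (by positivity : (m + 1 : ℝ) ≠ 0)]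
      exact hβ1
    refine le_csInf ⟨S p0.1 ω p0.2, ht0⟩ fun t ht => ?_
    by_contra hc
    push_neg at hc
    have hFle : (1 / (m + 1 : ℝ)) * ∑ i : Fin (m + 1),
        (1 / (M i ω : ℝ)) * ∑ j : Fin Mmax,
          (if (j : ℕ) < M i ω ∧ S i ω j ≤ t then (1 : ℝ) else 0)
        ≤ rkx (m + 1) Mmax (Y ω) ((Y ω lst).2 zj) := by
      have hrkx : rkx (m + 1) Mmax (Y ω) ((Y ω lst).2 zj)
          = ∑ i : Fin (m + 1), ∑ j : Fin Mmax,
            (if (j : ℕ) < M i ω ∧ S i ω j < S lst ω zj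
              then (1 : ℝ) / (((m + 1 : ℕ) : ℝ) * (M i ω : ℝ)) else 0) := rfl
      have hdistr : (1 / (m + 1 : ℝ)) * ∑ i : Fin (m + 1),
          (1 / (M i ω : ℝ)) * ∑ j : Fin Mmax,
            (if (j : ℕ) < M i ω ∧ S i ω j ≤ t then (1 : ℝ) else 0)
          = ∑ i : Fin (m + 1), ∑ j : Fin Mmax,
            (if (j : ℕ) < M i ω ∧ S i ω j ≤ t
              then (1 : ℝ) / (((m + 1 : ℕ) : ℝ) * (M i ω : ℝ)) else 0) := by
        rw [Finset.mul_sum]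
        refine Finset.sum_congr rfl fun i _ => ?_
        rw [← mul_assoc, Finset.mul_sum]
        refine Finset.sum_congr rfl fun j _ => ?_
        rw [mul_ite, mul_one, mul_zero]
        refine if_congr Iff.rfl ?_ rfl
        rw [div_mul_div_comm, one_mul]
        push_cast
        ring_nf
      rw [hdistr, hrkx]
      refine Finset.sum_le_sum fun i _ => Finset.sum_le_sum fun j _ => ?_
      have hw0 : (0 : ℝ) ≤ (1 : ℝ) / (((m + 1 : ℕ) : ℝ) * (M i ω : ℝ)) := by positivity
      by_cases h1 : (j : ℕ) < M i ω ∧ S i ω j ≤ t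
      · rw [if_pos h1, if_pos ⟨h1.1, lt_of_le_of_lt h1.2 hc⟩]
      · rw [if_neg h1]
        split_ifs with h2
        · exact hw0
        · exact le_refl 0
    have := le_trans ht hFle
    linarith
  have hGmeas : MeasurableSet (Y ⁻¹' Bset (m + 1) Mmax β lst zj) :=
    hYmeas (hBmeas lst zj)
  have hcompl : P ((Y ⁻¹' Bset (m + 1) Mmax β lst zj)ᶜ)
      = 1 - P (Y ⁻¹' Bset (m + 1) Mmax β lst zj) :=
    prob_compl_eq_one_sub hGmeas
  have hofreal : ENNReal.ofReal β = 1 - ENNReal.ofReal α := by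
    refine ENNReal.eq_sub_of_add_eq ENNReal.ofReal_ne_top ?_
    rw [← ENNReal.ofReal_add (le_of_lt hβ0) (le_of_lt hα0), hβdef]
    norm_num
  calc ENNReal.ofReal β = 1 - ENNReal.ofReal α := hofreal
    _ ≤ 1 - P (Y ⁻¹' Bset (m + 1) Mmax β lst zj) := tsub_le_tsub_left hPB 1
    _ = P ((Y ⁻¹' Bset (m + 1) Mmax β lst zj)ᶜ) := hcompl.symm
    _ ≤ _ := measure_mono hScompl
end

section
/- Let E, F, G, H be measurable spaces. On a probability space (Ω, ℱ, P), let (X_1, …, X_N) be an exchangeable family of E-valued random variables, let γ be a G-valued random variable, and let (ε_1, …, ε_N) be i.i.d. F-valued random variables, such that the three objects (X_1, …, X_N), γ, and (ε_1, …, ε_N) are mutually independent. Let Φ : E × G × F → H be measurable and define W_j = (X_j, Φ(X_j, γ, ε_j)) for j = 1, …, N. Then (W_1, …, W_N) is an exchangeable family of (E × H)-valued random variables. -/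
open MeasureTheory ProbabilityTheory

/-- Within-cluster exchangeability (Assumption 3) under the random-coefficient model:
if the covariates `(X_1, …, X_N)` are exchangeable, `(ε_1, …, ε_N)` are i.i.d., and the
covariate vector, the cluster-level random effect `γ`, and the error vector are mutually
independent, then the individual data vectors `W_j = (X_j, Φ(X_j, γ, ε_j))` are
exchangeable.  Mutual independence of the three objects is encoded as: the covariate
vector is independent of the pair (random effect, error vector), and the random effect
is independent of the error vector. -/
theorem random_coefficient_model_exchangeable
    {Ω E F G H : Type*} [MeasurableSpace Ω] [MeasurableSpace E] [MeasurableSpace F]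
    [MeasurableSpace G] [MeasurableSpace H]
    {P : Measure Ω} [IsProbabilityMeasure P] {N : ℕ}
    (X : Fin N → Ω → E) (hXmeas : ∀ j, Measurable (X j))
    (hXexch : ∀ σ : Equiv.Perm (Fin N),
      Measure.map (fun ω (j : Fin N) => X (σ j) ω) P = Measure.map (fun ω j => X j ω) P)
    (γ : Ω → G) (hγ : Measurable γ)
    (ε : Fin N → Ω → F) (hεmeas : ∀ j, Measurable (ε j))
    (hεindep : iIndepFun ε P)
    (hεident : ∀ j j', IdentDistrib (ε j) (ε j') P P)
    (hindep1 : IndepFun (fun ω (j : Fin N) => X j ω)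
      (fun ω => (γ ω, fun j : Fin N => ε j ω)) P)
    (hindep2 : IndepFun γ (fun ω (j : Fin N) => ε j ω) P)
    (Φ : E × G × F → H) (hΦ : Measurable Φ) :
    ∀ σ : Equiv.Perm (Fin N),
      Measure.map (fun ω (j : Fin N) =>
          (X (σ j) ω, Φ (X (σ j) ω, γ ω, ε (σ j) ω))) P
        = Measure.map (fun ω (j : Fin N) => (X j ω, Φ (X j ω, γ ω, ε j ω))) P := by
  intro σ
  classical
  rcases Nat.eq_zero_or_pos N with hN | hN
  · subst hN
    have heq : (fun ω (j : Fin 0) => (X (σ j) ω, Φ (X (σ j) ω, γ ω, ε (σ j) ω)))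
        = fun ω (j : Fin 0) => (X j ω, Φ (X j ω, γ ω, ε j ω)) := by
      funext ω j; exact Fin.elim0 j
    rw [heq]
  haveI : NeZero N := ⟨hN.ne'⟩
  set μ : Measure F := P.map (ε 0) with hμdef
  haveI : IsProbabilityMeasure μ := Measure.isProbabilityMeasure_map (hεmeas 0).aemeasurable
  have hμ : ∀ j, P.map (ε j) = μ := fun j => (hεident j 0).map_eq
  -- measurability of the vectors
  have hXv : Measurable (fun ω (j : Fin N) => X j ω) :=
    measurable_pi_lambda _ hXmeas
  have hXvσ : Measurable (fun ω (j : Fin N) => X (σ j) ω) :=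
    measurable_pi_lambda _ fun j => hXmeas (σ j)
  have hεv : Measurable (fun ω (j : Fin N) => ε j ω) :=
    measurable_pi_lambda _ hεmeas
  have hεvσ : Measurable (fun ω (j : Fin N) => ε (σ j) ω) :=
    measurable_pi_lambda _ fun j => hεmeas (σ j)
  -- the joint law of ε is the product measure
  have hεpi : P.map (fun ω (j : Fin N) => ε j ω) = Measure.pi (fun _ : Fin N => μ) := by
    refine (Measure.pi_eq fun s hs => ?_).symm
    rw [Measure.map_apply hεv (MeasurableSet.univ_pi hs)]
    have hpre : (fun ω (j : Fin N) => ε j ω) ⁻¹' Set.pi Set.univ s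
        = ⋂ j ∈ Finset.univ, ε j ⁻¹' s j := by
      ext ω; simp [Set.mem_pi]
    rw [hpre, hεindep.measure_inter_preimage_eq_mul Finset.univ (fun j _ => hs j)]
    refine Finset.prod_congr rfl fun j _ => ?_
    rw [← hμ j, Measure.map_apply (hεmeas j) (hs j)]
  -- the permuted error vector has the same law
  have hεσ : P.map (fun ω (j : Fin N) => ε (σ j) ω)
      = P.map (fun ω (j : Fin N) => ε j ω) := by
    have hmp : MeasurePreserving
        (MeasurableEquiv.arrowCongr' σ.symm (MeasurableEquiv.refl F))
        (Measure.pi fun _ : Fin N => μ) (Measure.pi fun _ : Fin N => μ) := by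
      refine measurePreserving_arrowCongr' (fun _ => μ) (fun _ => μ) σ.symm
        (MeasurableEquiv.refl F) fun _ => ?_
      exact ⟨measurable_id, Measure.map_id⟩
    have hcomp : (fun ω (j : Fin N) => ε (σ j) ω)
        = (MeasurableEquiv.arrowCongr' σ.symm (MeasurableEquiv.refl F))
            ∘ (fun ω (j : Fin N) => ε j ω) := by
      ext ω j
      simp [MeasurableEquiv.arrowCongr', Equiv.arrowCongr', Equiv.arrowCongr,
        Function.comp]
    rw [hcomp, ← Measure.map_map (MeasurableEquiv.measurable _) hεv, hεpi, hmp.map_eq]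
  -- the pair (γ, permuted ε) has the same law as (γ, ε)
  have hperm : Measurable (fun e : Fin N → F => fun j => e (σ j)) :=
    measurable_pi_lambda _ fun j => measurable_pi_apply (σ j)
  have hindep2σ : IndepFun γ (fun ω (j : Fin N) => ε (σ j) ω) P :=
    hindep2.comp measurable_id hperm
  have hpair : P.map (fun ω => (γ ω, fun j : Fin N => ε (σ j) ω))
      = P.map (fun ω => (γ ω, fun j : Fin N => ε j ω)) := by
    rw [(indepFun_iff_map_prod_eq_prod_map_map hγ.aemeasurable hεvσ.aemeasurable).1 hindep2σ,
      (indepFun_iff_map_prod_eq_prod_map_map hγ.aemeasurable hεv.aemeasurable).1 hindep2,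
      hεσ]
  -- the triple has the same law
  have hpermE : Measurable (fun x : Fin N → E => fun j => x (σ j)) :=
    measurable_pi_lambda _ fun j => measurable_pi_apply (σ j)
  have hpermGF : Measurable
      (fun p : G × (Fin N → F) => (p.1, fun j : Fin N => p.2 (σ j))) :=
    measurable_fst.prodMk (hperm.comp measurable_snd)
  have hindep1σ : IndepFun (fun ω (j : Fin N) => X (σ j) ω)
      (fun ω => (γ ω, fun j : Fin N => ε (σ j) ω)) P :=
    hindep1.comp hpermE hpermGF
  have hγε : Measurable (fun ω => (γ ω, fun j : Fin N => ε j ω)) := hγ.prodMk hεv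
  have hγεσ : Measurable (fun ω => (γ ω, fun j : Fin N => ε (σ j) ω)) := hγ.prodMk hεvσ
  have htriple : P.map (fun ω => ((fun j : Fin N => X (σ j) ω),
        (γ ω, fun j : Fin N => ε (σ j) ω)))
      = P.map (fun ω => ((fun j : Fin N => X j ω), (γ ω, fun j : Fin N => ε j ω))) := by
    rw [(indepFun_iff_map_prod_eq_prod_map_map hXvσ.aemeasurable hγεσ.aemeasurable).1 hindep1σ,
      (indepFun_iff_map_prod_eq_prod_map_map hXv.aemeasurable hγε.aemeasurable).1 hindep1,
      hXexch σ, hpair]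
  -- push forward through the measurable map assembling W
  set g : (Fin N → E) × (G × (Fin N → F)) → (Fin N → E × H) :=
    fun p j => (p.1 j, Φ (p.1 j, p.2.1, p.2.2 j)) with hgdef
  have hg : Measurable g := by
    refine measurable_pi_lambda _ fun j => ?_
    have h1 : Measurable fun p : (Fin N → E) × (G × (Fin N → F)) => p.1 j :=
      (measurable_pi_apply j).comp measurable_fst
    have h2 : Measurable fun p : (Fin N → E) × (G × (Fin N → F)) => p.2.1 :=
      measurable_fst.comp measurable_snd
    have h3 : Measurable fun p : (Fin N → E) × (G × (Fin N → F)) => p.2.2 j :=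
      (measurable_pi_apply j).comp (measurable_snd.comp measurable_snd)
    exact h1.prodMk (hΦ.comp (h1.prodMk (h2.prodMk h3)))
  have hTσ : Measurable (fun ω => ((fun j : Fin N => X (σ j) ω),
      (γ ω, fun j : Fin N => ε (σ j) ω))) := hXvσ.prodMk hγεσ
  have hT : Measurable (fun ω => ((fun j : Fin N => X j ω),
      (γ ω, fun j : Fin N => ε j ω))) := hXv.prodMk hγε
  calc Measure.map (fun ω (j : Fin N) =>
          (X (σ j) ω, Φ (X (σ j) ω, γ ω, ε (σ j) ω))) P
      = Measure.map (g ∘ (fun ω => ((fun j : Fin N => X (σ j) ω),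
          (γ ω, fun j : Fin N => ε (σ j) ω)))) P := rfl
    _ = Measure.map g (Measure.map (fun ω => ((fun j : Fin N => X (σ j) ω),
          (γ ω, fun j : Fin N => ε (σ j) ω))) P) := (Measure.map_map hg hTσ).symm
    _ = Measure.map g (Measure.map (fun ω => ((fun j : Fin N => X j ω),
          (γ ω, fun j : Fin N => ε j ω))) P) := by rw [htriple]
    _ = Measure.map (g ∘ (fun ω => ((fun j : Fin N => X j ω),
          (γ ω, fun j : Fin N => ε j ω)))) P := Measure.map_map hg hT
    _ = Measure.map (fun ω (j : Fin N) => (X j ω, Φ (X j ω, γ ω, ε j ω))) P := rfl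
end
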